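/- arXiv:math/0505156 — 7 statements merged into one kernel-verified Lean document; each statement's English description precedes it below -/
import Mathlib

section
/- Fix ε > 0 and set N = n^{1-ε}. Let Q_n be a random symmetric n×n matrix whose upper-diagonal entries are i.i.d. Bernoulli random variables taking values 0 and 1 with probability 1/2. Then the probability that Q_n is singular and abnormal (i.e., its row vectors admit a nontrivial vanishing linear combination in which the number of nonzero coefficients is less than N) is O((2/3)^n), with implied constant depending only on ε. -/
open scoped Classical

/-- The set of upper-diagonal index pairs `(i, j)` with `i ≤ j` of an `n × n` matrix. -/
abbrev UpIdx (n : ℕ) := {p : Fin n × Fin n // p.1 ≤ p.2}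

/-- The random symmetric Bernoulli matrix determined by an assignment `ω` of `{0,1}` values
(`Bool`) to the upper-diagonal entries. -/
noncomputable def bmat (n : ℕ) (ω : UpIdx n → Bool) : Matrix (Fin n) (Fin n) ℝ :=
  Matrix.of fun i j => if ω ⟨(min i j, max i j), min_le_max⟩ then 1 else 0

/-- The probability of an event under the uniform measure on a finite type. -/
noncomputable def unifProb {α : Type*} [Fintype α] (P : α → Prop) : ℝ :=
  ((Finset.univ.filter P).card : ℝ) / (Fintype.card α : ℝ)

/-- A matrix is abnormal (w.r.t. the parameter `N`) if its rows admit a nontrivial vanishing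
linear combination whose degree (number of nonzero coefficients) is less than `N`. -/
def Abnormal {n : ℕ} (M : Matrix (Fin n) (Fin n) ℝ) (N : ℝ) : Prop :=
  ∃ c : Fin n → ℝ, c ≠ 0 ∧ (∑ i, c i • M i) = 0 ∧
    ((Finset.univ.filter fun i => c i ≠ 0).card : ℝ) < N

def pairIdx {n : ℕ} (i j : Fin n) : UpIdx n := ⟨(min i j, max i j), min_le_max⟩

lemma bmat_apply {n : ℕ} (ω : UpIdx n → Bool) (i j : Fin n) :
    bmat n ω i j = if ω (pairIdx i j) then 1 else 0 := rfl

variable {n : ℕ}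

def IsFree (S T : Finset (Fin n)) (p : UpIdx n) : Prop :=
  (p.1.1 ∈ S ∧ p.1.2 ∉ S ∧ p.1.2 ∉ T) ∨ (p.1.2 ∈ S ∧ p.1.1 ∉ S ∧ p.1.1 ∉ T)

abbrev Jty (S T : Finset (Fin n)) := {j : Fin n // j ∉ S ∧ j ∉ T}

/-- data of a free pair: the column index (outside S∪T) and the row index (in S). -/
def freeDat (S T : Finset (Fin n)) (p : UpIdx n) (h : IsFree S T p) : Jty S T × ↥S :=
  if h1 : p.1.1 ∈ S then
    (⟨p.1.2, by rcases h with ⟨_, h2, h3⟩ | ⟨_, h2, _⟩; exact ⟨h2, h3⟩; exact absurd h1 h2⟩,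
     ⟨p.1.1, h1⟩)
  else
    (⟨p.1.1, by rcases h with ⟨hh, _, _⟩ | ⟨_, h2, h3⟩; exact absurd hh h1; exact ⟨h2, h3⟩⟩,
     ⟨p.1.2, by rcases h with ⟨hh, _, _⟩ | ⟨hh, _, _⟩; exact absurd hh h1; exact hh⟩)

lemma isFree_pairIdx {S T : Finset (Fin n)} (i : ↥S) (j : Jty S T) :
    IsFree S T (pairIdx i.1 j.1) := by
  rcases le_total i.1 j.1 with h | h
  · left
    simp only [pairIdx, min_eq_left h, max_eq_right h]
    exact ⟨i.2, j.2.1, j.2.2⟩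
  · right
    simp only [pairIdx, min_eq_right h, max_eq_left h]
    exact ⟨i.2, j.2.1, j.2.2⟩

lemma pairIdx_freeDat {S T : Finset (Fin n)} (p : UpIdx n) (h : IsFree S T p) :
    pairIdx ((freeDat S T p h).2 : Fin n) ((freeDat S T p h).1 : Fin n) = p := by
  obtain ⟨⟨a, b⟩, hab⟩ := p
  by_cases h1 : a ∈ S <;>
    simp only [freeDat, h1, dif_pos, dif_neg, not_false_iff] <;>
    · apply Subtype.ext
      simp [pairIdx, min_eq_left hab, max_eq_right hab, min_eq_right hab, max_eq_left hab]

lemma freeDat_pairIdx {S T : Finset (Fin n)} (i : ↥S) (j : Jty S T) (h) :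
    freeDat S T (pairIdx i.1 j.1) h = (j, i) := by
  by_cases hle : i.1 ≤ j.1
  · have h1 : (pairIdx i.1 j.1).1.1 ∈ S := by
      simpa [pairIdx, min_eq_left hle] using i.2
    simp only [freeDat, h1, dif_pos]
    ext <;> simp [pairIdx, min_eq_left hle, max_eq_right hle]
  · have hle' : j.1 ≤ i.1 := le_of_not_ge hle
    have h1 : ¬ (pairIdx i.1 j.1).1.1 ∈ S := by
      simpa [pairIdx, min_eq_right hle'] using j.2.1
    simp only [freeDat, h1, dif_neg, not_false_iff]
    ext <;> simp [pairIdx, min_eq_right hle', max_eq_left hle']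

/-- The coordinate-splitting equivalence. -/
noncomputable def eqvOm (S T : Finset (Fin n)) :
    (UpIdx n → Bool) ≃ (({p : UpIdx n // ¬ IsFree S T p} → Bool) × (Jty S T → ↥S → Bool)) where
  toFun ω := (fun r => ω r.1, fun j i => ω (pairIdx i.1 j.1))
  invFun q := fun p =>
    if h : IsFree S T p then q.2 (freeDat S T p h).1 (freeDat S T p h).2 else q.1 ⟨p, h⟩
  left_inv ω := by
    funext p
    by_cases h : IsFree S T p
    · simp only [h, dif_pos]
      exact congrArg ω (pairIdx_freeDat p h)
    · simp [h]
  right_inv q := by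
    refine Prod.ext (funext fun r => ?_) (funext fun j => funext fun i => ?_)
    · simp [r.2]
    · have h := isFree_pairIdx i j
      simp only [h, dif_pos]
      rw [freeDat_pairIdx i j h]

noncomputable def colVec (ω : UpIdx n → Bool) (S : Finset (Fin n)) (j : Fin n) : ↥S → ℝ :=
  fun i => bmat n ω i.1 j

def cubeVec {ι : Type*} (x : ι → Bool) : ι → ℝ := fun i => if x i then 1 else 0

lemma not_isFree_pair {S T : Finset (Fin n)} (hd : Disjoint S T) (i : ↥S) (t : ↥T) :
    ¬ IsFree S T (pairIdx i.1 t.1) := by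
  have hiS := i.2
  have htT := t.2
  have htS : t.1 ∉ S := fun h => (Finset.disjoint_left.1 hd h) htT
  rcases le_total i.1 t.1 with h | h <;>
    rintro (⟨h1, h2, h3⟩ | ⟨h1, h2, h3⟩) <;>
    simp_all [pairIdx, min_eq_left h, max_eq_right h, min_eq_right h, max_eq_left h]

noncomputable def Wsp (S T : Finset (Fin n)) (hd : Disjoint S T)
    (ρ : {p : UpIdx n // ¬ IsFree S T p} → Bool) : Submodule ℝ (↥S → ℝ) :=
  Submodule.span ℝ (Set.range fun t : ↥T =>
    (fun i : ↥S => if ρ ⟨pairIdx i.1 t.1, not_isFree_pair hd i t⟩ then (1 : ℝ) else 0))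

def Fev (S T : Finset (Fin n)) (ω : UpIdx n → Bool) : Prop :=
  ∀ j : Fin n, j ∉ S → j ∉ T →
    colVec ω S j ∈ Submodule.span ℝ (Set.range fun t : ↥T => colVec ω S t.1)

lemma colVec_symm_t {S T : Finset (Fin n)} (hd : Disjoint S T)
    (q : ({p : UpIdx n // ¬ IsFree S T p} → Bool) × (Jty S T → ↥S → Bool)) (t : ↥T) :
    colVec ((eqvOm S T).symm q) S t.1 =
      fun i : ↥S => if q.1 ⟨pairIdx i.1 t.1, not_isFree_pair hd i t⟩ then (1 : ℝ) else 0 := by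
  funext i
  have h := not_isFree_pair hd i t
  have hω : (eqvOm S T).symm q (pairIdx i.1 t.1) = q.1 ⟨pairIdx i.1 t.1, h⟩ := by
    simp only [eqvOm, Equiv.coe_fn_symm_mk, h, dif_neg, not_false_iff]
  simp only [colVec, bmat_apply, hω]

lemma colVec_symm_j {S T : Finset (Fin n)}
    (q : ({p : UpIdx n // ¬ IsFree S T p} → Bool) × (Jty S T → ↥S → Bool)) (j : Jty S T) :
    colVec ((eqvOm S T).symm q) S j.1 = cubeVec (q.2 j) := by
  funext i
  have h := isFree_pairIdx i j
  have hω : (eqvOm S T).symm q (pairIdx i.1 j.1) = q.2 j i := by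
    simp only [eqvOm, Equiv.coe_fn_symm_mk, h, dif_pos]
    rw [freeDat_pairIdx i j h]
  simp only [colVec, bmat_apply, cubeVec, hω]

lemma Fev_symm_iff {S T : Finset (Fin n)} (hd : Disjoint S T)
    (q : ({p : UpIdx n // ¬ IsFree S T p} → Bool) × (Jty S T → ↥S → Bool)) :
    Fev S T ((eqvOm S T).symm q) ↔ ∀ j : Jty S T, cubeVec (q.2 j) ∈ Wsp S T hd q.1 := by
  have hspan : (Submodule.span ℝ (Set.range fun t : ↥T => colVec ((eqvOm S T).symm q) S t.1))
      = Wsp S T hd q.1 := by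
    rw [Wsp]
    have : (fun t : ↥T => colVec ((eqvOm S T).symm q) S t.1)
        = fun t : ↥T => (fun i : ↥S =>
            if q.1 ⟨pairIdx i.1 t.1, not_isFree_pair hd i t⟩ then (1 : ℝ) else 0) :=
      funext fun t => colVec_symm_t hd q t
    rw [this]
  constructor
  · intro hF j
    have := hF j.1 j.2.1 j.2.2
    rwa [colVec_symm_j q j, hspan] at this
  · intro hF j hjS hjT
    have := hF ⟨j, hjS, hjT⟩
    rwa [show colVec ((eqvOm S T).symm q) S j = cubeVec (q.2 ⟨j, hjS, hjT⟩) from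
      colVec_symm_j q ⟨j, hjS, hjT⟩, hspan]

lemma odlyzko {ι : Type*} [Fintype ι] (W : Submodule ℝ (ι → ℝ)) (hW : W ≠ ⊤) :
    Fintype.card {x : ι → Bool // cubeVec x ∈ W} ≤ 2 ^ (Fintype.card ι - 1) := by
  obtain ⟨f, hf0, hfW⟩ := W.exists_dual_map_eq_bot_of_lt_top (lt_top_iff_ne_top.2 hW)
    inferInstance
  have hfW' : ∀ w ∈ W, f w = 0 := by
    intro w hw
    have : f w ∈ W.map f := Submodule.mem_map_of_mem hw
    rwa [hfW, Submodule.mem_bot] at this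
  have : ∃ i0, f (Pi.single i0 1 : ι → ℝ) ≠ 0 := by
    by_contra h
    push_neg at h
    exact hf0 ((Pi.basisFun ℝ ι).ext (by simpa using h))
  obtain ⟨i0, hi0⟩ := this
  have hinj : Function.Injective
      (fun x : {x : ι → Bool // cubeVec x ∈ W} => (fun i : {i : ι // i ≠ i0} => x.1 i)) := by
    rintro ⟨x, hx⟩ ⟨y, hy⟩ hxy
    have hoff : ∀ i ≠ i0, x i = y i := fun i hi => congrFun hxy ⟨i, hi⟩
    have hdiff : cubeVec x - cubeVec y =
        (cubeVec x i0 - cubeVec y i0) • (Pi.single i0 1 : ι → ℝ) := by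
      funext i
      by_cases hi : i = i0
      · subst hi; simp [Pi.single_eq_same]
      · simp [Pi.sub_apply, Pi.single_eq_of_ne hi, cubeVec, hoff i hi]
    have h0 : f (cubeVec x - cubeVec y) = 0 := by
      rw [map_sub, hfW' _ hx, hfW' _ hy, sub_zero]
    rw [hdiff, map_smul, smul_eq_mul] at h0
    have := (mul_eq_zero.1 h0).resolve_right hi0
    have hxy0 : x i0 = y i0 := by
      by_cases hx0 : x i0 <;> by_cases hy0 : y i0 <;>
        simp [cubeVec, hx0, hy0] at this ⊢
    ext i
    by_cases hi : i = i0
    · subst hi; exact hxy0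
    · exact hoff i hi
  calc Fintype.card {x : ι → Bool // cubeVec x ∈ W}
      ≤ Fintype.card ({i : ι // i ≠ i0} → Bool) := Fintype.card_le_of_injective _ hinj
    _ = 2 ^ (Fintype.card ι - 1) := by
        rw [Fintype.card_fun, Fintype.card_bool]
        congr 1
        simp [Fintype.card_subtype_compl]

lemma Wsp_ne_top {S T : Finset (Fin n)} (hd : Disjoint S T) (hT : T.card < S.card)
    (ρ : {p : UpIdx n // ¬ IsFree S T p} → Bool) : Wsp S T hd ρ ≠ ⊤ := by
  apply ne_of_lt
  apply span_lt_top_of_card_lt_finrank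
  rw [Module.finrank_fintype_fun_eq_card, Fintype.card_coe]
  calc (Set.range _).toFinset.card
      ≤ Fintype.card ↥T := by
        rw [Set.toFinset_range]
        exact (Finset.card_image_le).trans (by simp)
    _ < S.card := by rwa [Fintype.card_coe]

/-- the equivalence for free pairs. -/
noncomputable def eqvFree (S T : Finset (Fin n)) :
    {p : UpIdx n // IsFree S T p} ≃ Jty S T × ↥S where
  toFun p := freeDat S T p.1 p.2
  invFun x := ⟨pairIdx x.2.1 x.1.1, isFree_pairIdx x.2 x.1⟩
  left_inv p := Subtype.ext (pairIdx_freeDat p.1 p.2)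
  right_inv x := by
    obtain ⟨j, i⟩ := x
    exact freeDat_pairIdx i j _

lemma card_Jty {S T : Finset (Fin n)} (hd : Disjoint S T) :
    Fintype.card (Jty S T) = n - S.card - T.card := by
  rw [Fintype.card_subtype]
  have : (Finset.univ.filter fun j : Fin n => j ∉ S ∧ j ∉ T) = (S ∪ T)ᶜ := by
    ext j; simp [Finset.mem_compl, Finset.mem_union]
  rw [this, Finset.card_compl, Finset.card_union_of_disjoint hd, Fintype.card_fin, Nat.sub_sub]

set_option maxHeartbeats 2000000 in
lemma count_Fev {S T : Finset (Fin n)} (hS : S.Nonempty) (hd : Disjoint S T)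
    (hT : T.card < S.card) :
    (Finset.univ.filter (Fev S T)).card
      ≤ 2 ^ (Fintype.card (UpIdx n) - (n - S.card - T.card)) := by
  classical
  set mJ := n - S.card - T.card with hmJdef
  have hmJ : Fintype.card (Jty S T) = mJ := card_Jty hd
  have hFree : Fintype.card {p : UpIdx n // IsFree S T p} = mJ * S.card := by
    rw [Fintype.card_congr (eqvFree S T), Fintype.card_prod, Fintype.card_coe, hmJ]
  have hFreeLe : mJ * S.card ≤ Fintype.card (UpIdx n) := by
    rw [← hFree]; exact Fintype.card_subtype_le _
  have hNF : Fintype.card {p : UpIdx n // ¬ IsFree S T p}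
      = Fintype.card (UpIdx n) - mJ * S.card := by
    rw [Fintype.card_subtype_compl, hFree]
  have e : {ω : UpIdx n → Bool // Fev S T ω}
      ≃ Σ ρ : {p : UpIdx n // ¬ IsFree S T p} → Bool,
          ∀ _ : Jty S T, {y : ↥S → Bool // cubeVec y ∈ Wsp S T hd ρ} :=
    ((eqvOm S T).subtypeEquiv (fun ω => by
        conv_lhs => rw [← Equiv.symm_apply_apply (eqvOm S T) ω]
        exact Fev_symm_iff hd _)).trans
      ((Equiv.subtypeProdEquivSigmaSubtype
          (fun ρ x => ∀ j : Jty S T, cubeVec (x j) ∈ Wsp S T hd ρ)).trans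
        (Equiv.sigmaCongrRight fun ρ => Equiv.subtypePiEquivPi
          (p := fun (_ : Jty S T) (y : ↥S → Bool) => cubeVec y ∈ Wsp S T hd ρ)))
  rw [show (Finset.univ.filter (Fev S T)).card = Fintype.card {ω : UpIdx n → Bool // Fev S T ω}
    from (Fintype.card_subtype _).symm]
  rw [Fintype.card_congr e, Fintype.card_sigma]
  calc ∑ ρ : {p : UpIdx n // ¬ IsFree S T p} → Bool,
        Fintype.card (∀ _ : Jty S T, {y : ↥S → Bool // cubeVec y ∈ Wsp S T hd ρ})
      ≤ ∑ _ρ : {p : UpIdx n // ¬ IsFree S T p} → Bool, (2 ^ (S.card - 1)) ^ mJ := by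
        apply Finset.sum_le_sum
        intro ρ _
        rw [Fintype.card_pi]
        calc ∏ _j : Jty S T, Fintype.card {y : ↥S → Bool // cubeVec y ∈ Wsp S T hd ρ}
            ≤ ∏ _j : Jty S T, 2 ^ (S.card - 1) := by
              apply Finset.prod_le_prod'
              intro j _
              have := odlyzko (Wsp S T hd ρ) (Wsp_ne_top hd hT ρ)
              rw [Fintype.card_coe] at this
              convert this using 2
              rfl
          _ = (2 ^ (S.card - 1)) ^ mJ := by
              rw [Finset.prod_const, Finset.card_univ, hmJ]
    _ = 2 ^ (Fintype.card (UpIdx n) - mJ * S.card) * (2 ^ (S.card - 1)) ^ mJ := by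
        rw [Finset.sum_const, Finset.card_univ, Fintype.card_fun, Fintype.card_bool, hNF,
          smul_eq_mul]
    _ ≤ 2 ^ (Fintype.card (UpIdx n) - mJ) := by
        rw [← pow_mul, ← pow_add]
        apply Nat.pow_le_pow_right (by norm_num)
        have hs1 : 1 ≤ S.card := hS.card_pos
        have hmul : (S.card - 1) * mJ = S.card * mJ - mJ := by
          rw [Nat.sub_one_mul]
        have hcomm : S.card * mJ = mJ * S.card := Nat.mul_comm _ _
        have hle : mJ ≤ mJ * S.card := Nat.le_mul_of_pos_right _ hs1
        omega

lemma reduction {ω : UpIdx n → Bool} {N : ℝ} (h : Abnormal (bmat n ω) N) :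
    ∃ S T : Finset (Fin n), S.Nonempty ∧ ((S.card : ℝ) < N) ∧ Disjoint S T ∧
      T.card < S.card ∧ Fev S T ω := by
  classical
  obtain ⟨c, hc0, hsum, hcard⟩ := h
  set S : Finset (Fin n) := Finset.univ.filter (fun i => c i ≠ 0) with hSdef
  have hS : S.Nonempty := by
    obtain ⟨i, hi⟩ := Function.ne_iff.1 hc0
    exact ⟨i, by simpa [hSdef] using hi⟩
  refine ⟨S, ?_⟩
  haveI : Nonempty (Fin n) := ⟨hS.choose⟩
  -- the functional
  set φ : (↥S → ℝ) →ₗ[ℝ] ℝ := ∑ i : ↥S, c i.1 • LinearMap.proj i with hφdef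
  have hφ : ∀ x : ↥S → ℝ, φ x = ∑ i : ↥S, c i.1 * x i := by
    intro x
    simp [hφdef, LinearMap.sum_apply, LinearMap.smul_apply, LinearMap.proj_apply, smul_eq_mul]
  have hrow : ∀ j : Fin n, ∑ i : Fin n, c i * bmat n ω i j = 0 := by
    intro j
    have := congrFun hsum j
    simpa [Finset.sum_apply] using this
  have key : ∀ j : Fin n, φ (colVec ω S j) = 0 := by
    intro j
    rw [hφ]
    have h1 : ∑ i : ↥S, c i.1 * colVec ω S j i = ∑ i ∈ S, c i * bmat n ω i j := by
      rw [← Finset.sum_coe_sort S (fun i => c i * bmat n ω i j)]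
      rfl
    rw [h1, Finset.sum_subset (Finset.subset_univ S), hrow j]
    intro i _ hiS
    have : c i = 0 := by
      by_contra hne
      exact hiS (by simp [hSdef, hne])
    simp [this]
  have hφ0 : φ ≠ 0 := by
    obtain ⟨i0, hi0⟩ := hS
    intro hcon
    have hci0 : c i0 ≠ 0 := by simpa [hSdef] using hi0
    have := congrArg (fun ψ => ψ (Pi.single (⟨i0, hi0⟩ : ↥S) 1)) hcon
    simp only [hφ, LinearMap.zero_apply] at this
    rw [Finset.sum_eq_single (⟨i0, hi0⟩ : ↥S)] at this
    · simp at this; exact hci0 this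
    · intro b _ hb; simp [Pi.single_eq_of_ne hb]
    · simp
  have hker : LinearMap.ker φ < ⊤ :=
    lt_top_iff_ne_top.2 (fun hcon => hφ0 (LinearMap.ker_eq_top.1 hcon))
  set A : Set (Fin n) := {j : Fin n | j ∉ S} with hAdef
  set V : Submodule ℝ (↥S → ℝ) := Submodule.span ℝ (colVec ω S '' A) with hVdef
  have hVker : V ≤ LinearMap.ker φ := by
    rw [hVdef, Submodule.span_le]
    rintro v ⟨j, _, rfl⟩
    exact LinearMap.mem_ker.2 (key j)
  have hVrank : Module.finrank ℝ V < S.card := by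
    calc Module.finrank ℝ V ≤ Module.finrank ℝ (LinearMap.ker φ) :=
          Submodule.finrank_mono hVker
      _ < Module.finrank ℝ (↥S → ℝ) := Submodule.finrank_lt hker.ne
      _ = S.card := by rw [Module.finrank_fintype_fun_eq_card, Fintype.card_coe]
  obtain ⟨b, hbsub, hbspan, hbli⟩ := exists_linearIndependent ℝ (colVec ω S '' A)
  have hbfin : b.Finite := hbli.setFinite
  haveI : Fintype b := hbfin.fintype
  have hbcard : b.toFinset.card < S.card := by
    rw [← finrank_span_set_eq_card hbli, hbspan]
    exact hVrank
  -- choose preimages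
  set g : (↥S → ℝ) → Fin n := Function.invFunOn (colVec ω S) A with hgdef
  have hg : ∀ v ∈ b, g v ∈ A ∧ colVec ω S (g v) = v := by
    intro v hv
    obtain ⟨j, hjA, hjv⟩ := hbsub hv
    exact ⟨Function.invFunOn_mem ⟨j, hjA, hjv⟩, Function.invFunOn_eq ⟨j, hjA, hjv⟩⟩
  set T : Finset (Fin n) := b.toFinset.image g with hTdef
  have hTS : Disjoint S T := by
    rw [Finset.disjoint_right]
    intro x hxT
    rw [hTdef, Finset.mem_image] at hxT
    obtain ⟨v, hv, rfl⟩ := hxT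
    exact (hg v (Set.mem_toFinset.1 hv)).1
  have hTcard : T.card < S.card :=
    lt_of_le_of_lt (Finset.card_image_le) hbcard
  refine ⟨T, hS, hcard, hTS, hTcard, ?_⟩
  intro j hjS hjT
  have hmem : colVec ω S j ∈ V :=
    Submodule.subset_span ⟨j, hjS, rfl⟩
  have hle : V ≤ Submodule.span ℝ (Set.range fun t : ↥T => colVec ω S t.1) := by
    rw [hVdef, ← hbspan, Submodule.span_le]
    intro v hv
    apply Submodule.subset_span
    have hgv : g v ∈ T := by
      rw [hTdef, Finset.mem_image]
      exact ⟨v, Set.mem_toFinset.2 hv, rfl⟩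
    exact ⟨⟨g v, hgv⟩, (hg v hv).2⟩
  exact hle hmem

lemma n_le_cardUpIdx (n : ℕ) : n ≤ Fintype.card (UpIdx n) := by
  have : Function.Injective (fun i : Fin n => (⟨(i, i), le_refl _⟩ : UpIdx n)) := by
    intro a b h
    simpa using congrArg (fun p => p.1.1) h
  simpa using Fintype.card_le_of_injective _ this

lemma pow_term_bound {cardE n s t K : ℕ} (hcardE : n ≤ cardE) (hs : s ≤ K) (ht : t ≤ K) :
    (2 : ℝ) ^ (cardE - (n - s - t)) ≤ 2 ^ cardE * 4 ^ K * (1 / 2) ^ n := by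
  set m := n - s - t with hm
  calc (2:ℝ) ^ (cardE - m) ≤ 2 ^ (cardE + 2 * K - n) := by
        apply pow_le_pow_right₀ (by norm_num : (1:ℝ) ≤ 2)
        omega
    _ = 2 ^ cardE * 4 ^ K * (1 / 2) ^ n := by
        rw [div_pow, one_pow, mul_one_div, eq_div_iff (by positivity : (2:ℝ) ^ n ≠ 0)]
        rw [show (4:ℝ) ^ K = 2 ^ (2 * K) from by rw [pow_mul]; norm_num]
        rw [← pow_add, ← pow_add]
        congr 1
        omega

set_option maxHeartbeats 2000000 in
lemma main_bound (n : ℕ) (N : ℝ) :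
    unifProb (fun ω : UpIdx n → Bool => (bmat n ω).det = 0 ∧ Abnormal (bmat n ω) N)
      ≤ ((((Nat.ceil N) + 1) * (n + 1) ^ (Nat.ceil N) : ℕ) : ℝ) ^ 2 * 4 ^ (Nat.ceil N)
          * (1 / 2) ^ n := by
  classical
  set K := Nat.ceil N with hK
  set cardE := Fintype.card (UpIdx n) with hcardE
  set Pairs : Finset (Finset (Fin n) × Finset (Fin n)) :=
    Finset.univ.filter (fun p => p.1.Nonempty ∧ ((p.1.card : ℝ) < N) ∧ Disjoint p.1 p.2 ∧
      p.2.card < p.1.card) with hPairs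
  have hsubset : Finset.univ.filter
      (fun ω : UpIdx n → Bool => (bmat n ω).det = 0 ∧ Abnormal (bmat n ω) N)
      ⊆ Pairs.biUnion (fun p => Finset.univ.filter (Fev p.1 p.2)) := by
    intro ω hω
    rw [Finset.mem_filter] at hω
    obtain ⟨S, T, hS, hcard, hd, hT, hF⟩ := reduction hω.2.2
    rw [Finset.mem_biUnion]
    exact ⟨(S, T), by simp [hPairs, hS, hcard, hd, hT], by simp [hF]⟩
  have hcount : (Finset.univ.filter
      (fun ω : UpIdx n → Bool => (bmat n ω).det = 0 ∧ Abnormal (bmat n ω) N)).card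
      ≤ ∑ p ∈ Pairs, 2 ^ (cardE - (n - p.1.card - p.2.card)) :=
    le_trans (Finset.card_le_card hsubset) (le_trans (Finset.card_biUnion_le)
      (Finset.sum_le_sum fun p hp => by
        rw [hPairs, Finset.mem_filter] at hp
        exact count_Fev hp.2.1 hp.2.2.2.1 hp.2.2.2.2))
  -- membership in Pairs gives card bounds
  have hmemK : ∀ p ∈ Pairs, p.1.card ≤ K ∧ p.2.card ≤ K := by
    intro p hp
    rw [hPairs, Finset.mem_filter] at hp
    have h1 : p.1.card < K + 1 := by
      have := hp.2.2.1
      have := Nat.lt_ceil.2 this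
      omega
    omega
  have hPairsCard : Pairs.card ≤ ((K + 1) * (n + 1) ^ K) ^ 2 := by
    have hsub : Pairs ⊆ (Finset.univ.filter fun S : Finset (Fin n) => S.card ≤ K) ×ˢ
        (Finset.univ.filter fun S : Finset (Fin n) => S.card ≤ K) := by
      intro p hp
      obtain ⟨h1, h2⟩ := hmemK p hp
      rw [Finset.mem_product]
      simp [h1, h2]
    have hone : (Finset.univ.filter fun S : Finset (Fin n) => S.card ≤ K).card
        ≤ (K + 1) * (n + 1) ^ K := by
      have hsub2 : (Finset.univ.filter fun S : Finset (Fin n) => S.card ≤ K)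
          ⊆ (Finset.range (K + 1)).biUnion
              (fun k => Finset.powersetCard k Finset.univ) := by
        intro S hS
        rw [Finset.mem_filter] at hS
        rw [Finset.mem_biUnion]
        exact ⟨S.card, Finset.mem_range.2 (by omega),
          Finset.mem_powersetCard.2 ⟨Finset.subset_univ _, rfl⟩⟩
      calc (Finset.univ.filter fun S : Finset (Fin n) => S.card ≤ K).card
          ≤ ∑ k ∈ Finset.range (K + 1), (Finset.powersetCard k (Finset.univ :
              Finset (Fin n))).card :=
            le_trans (Finset.card_le_card hsub2) Finset.card_biUnion_le
        _ ≤ ∑ _k ∈ Finset.range (K + 1), (n + 1) ^ K := by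
            apply Finset.sum_le_sum
            intro k hk
            rw [Finset.card_powersetCard, Finset.card_univ, Fintype.card_fin]
            calc n.choose k ≤ n ^ k := Nat.choose_le_pow n k
              _ ≤ (n + 1) ^ k := Nat.pow_le_pow_left (by omega) k
              _ ≤ (n + 1) ^ K := Nat.pow_le_pow_right (by omega)
                  (by rw [Finset.mem_range] at hk; omega)
        _ = (K + 1) * (n + 1) ^ K := by rw [Finset.sum_const, Finset.card_range, smul_eq_mul]
    calc Pairs.card ≤ _ := Finset.card_le_card hsub
      _ ≤ ((K + 1) * (n + 1) ^ K) * ((K + 1) * (n + 1) ^ K) := by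
          rw [Finset.card_product]; exact Nat.mul_le_mul hone hone
      _ = ((K + 1) * (n + 1) ^ K) ^ 2 := (sq _).symm
  -- now to the reals
  have hΩ : (Fintype.card (UpIdx n → Bool) : ℝ) = 2 ^ cardE := by
    rw [Fintype.card_fun, Fintype.card_bool]; push_cast; ring
  rw [unifProb, hΩ, div_le_iff₀ (by positivity)]
  calc _ ≤ ∑ p ∈ Pairs, (2 : ℝ) ^ (cardE - (n - p.1.card - p.2.card)) := by
        have h' : ((Finset.univ.filter (fun ω : UpIdx n → Bool =>
            (bmat n ω).det = 0 ∧ Abnormal (bmat n ω) N)).card : ℝ)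
            ≤ ((∑ p ∈ Pairs, 2 ^ (cardE - (n - p.1.card - p.2.card)) : ℕ) : ℝ) := by
          exact_mod_cast hcount
        apply le_trans _ (le_of_eq (by push_cast; rfl : ((∑ p ∈ Pairs,
          2 ^ (cardE - (n - p.1.card - p.2.card)) : ℕ) : ℝ)
            = ∑ p ∈ Pairs, (2 : ℝ) ^ (cardE - (n - p.1.card - p.2.card))))
        convert h' using 3
        congr!
        ext ω; simp
    _ ≤ ∑ _p ∈ Pairs, (2:ℝ) ^ cardE * 4 ^ K * (1 / 2) ^ n := by
        apply Finset.sum_le_sum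
        intro p hp
        obtain ⟨h1, h2⟩ := hmemK p hp
        exact pow_term_bound (n_le_cardUpIdx n) h1 h2
    _ = (Pairs.card : ℝ) * ((2:ℝ) ^ cardE * 4 ^ K * (1 / 2) ^ n) := by
        rw [Finset.sum_const, nsmul_eq_mul]
    _ ≤ ((((K + 1) * (n + 1) ^ K : ℕ) : ℝ)) ^ 2 * ((2:ℝ) ^ cardE * 4 ^ K * (1 / 2) ^ n) := by
        apply mul_le_mul_of_nonneg_right _ (by positivity)
        calc (Pairs.card : ℝ) ≤ ((((K + 1) * (n + 1) ^ K) ^ 2 : ℕ) : ℝ) := by exact_mod_cast hPairsCard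
          _ = _ := by push_cast; ring
    _ = ((((K + 1) * (n + 1) ^ K : ℕ) : ℝ)) ^ 2 * 4 ^ K * (1 / 2) ^ n * 2 ^ cardE := by ring

open Filter Real Topology Asymptotics in
lemma log_mul_rpow_neg_tendsto {δ : ℝ} (hδ : 0 < δ) :
    Tendsto (fun x : ℝ => Real.log (x + 1) * x ^ (-δ)) atTop (𝓝 0) := by
  have h1 : (fun x : ℝ => Real.log (x + 1)) =o[atTop] fun x => (x + 1) ^ δ :=
    (isLittleO_log_rpow_atTop hδ).comp_tendsto (tendsto_atTop_add_const_right _ 1 tendsto_id)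
  have h2 : (fun x : ℝ => (x + 1) ^ δ) =O[atTop] fun x => x ^ δ := by
    apply IsBigO.of_bound ((2:ℝ) ^ δ)
    filter_upwards [eventually_ge_atTop (1 : ℝ)] with x hx
    have hx0 : (0 : ℝ) ≤ x := by linarith
    rw [Real.norm_eq_abs, Real.norm_eq_abs, abs_of_nonneg (rpow_nonneg (by linarith) _),
      abs_of_nonneg (rpow_nonneg hx0 _)]
    calc (x + 1) ^ δ ≤ (2 * x) ^ δ := Real.rpow_le_rpow (by linarith) (by linarith) hδ.le
      _ = 2 ^ δ * x ^ δ := Real.mul_rpow (by norm_num) hx0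
  have h3 := (h1.trans_isBigO h2).tendsto_div_nhds_zero
  apply h3.congr'
  filter_upwards [eventually_gt_atTop (0 : ℝ)] with x hx
  rw [Real.rpow_neg hx.le, div_eq_mul_inv]

open Filter Real Topology in
lemma phi_tendsto (ε : ℝ) (hε : 0 < ε) :
    Tendsto (fun x : ℝ => (x ^ (1 - ε) + 2) * (2 + 2 * Real.log (x + 1) + Real.log 4) / x)
      atTop (𝓝 0) := by
  have hA := log_mul_rpow_neg_tendsto hε
  have hB : Tendsto (fun x : ℝ => Real.log (x + 1) * x⁻¹) atTop (𝓝 0) := by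
    apply (log_mul_rpow_neg_tendsto one_pos).congr'
    filter_upwards [eventually_gt_atTop (0 : ℝ)] with x hx
    rw [Real.rpow_neg_one]
  have hC := tendsto_rpow_neg_atTop hε
  have hD : Tendsto (fun x : ℝ => x⁻¹) atTop (𝓝 (0:ℝ)) := tendsto_inv_atTop_zero
  have hsum : Tendsto (fun x : ℝ =>
      (2 + Real.log 4) * x ^ (-ε) + 2 * (Real.log (x + 1) * x ^ (-ε))
        + (2 * (2 + Real.log 4)) * x⁻¹ + 4 * (Real.log (x + 1) * x⁻¹)) atTop (𝓝 0) := by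
    have := (((hC.const_mul (2 + Real.log 4)).add (hA.const_mul 2)).add
      (hD.const_mul (2 * (2 + Real.log 4)))).add (hB.const_mul 4)
    simpa using this
  apply hsum.congr'
  filter_upwards [eventually_ge_atTop (1 : ℝ)] with x hx
  have hx0 : (0 : ℝ) < x := by linarith
  have hrw : x ^ (1 - ε) = x * x ^ (-ε) := by
    rw [sub_eq_add_neg, Real.rpow_add hx0, Real.rpow_one]
  rw [hrw]
  field_simp
  ring

open Filter Real Topology in
/-- The probability that a random symmetric Bernoulli matrix is singular and abnormal
(w.r.t. `N = n^{1-ε}`) is `O((2/3)^n)`, with implied constant depending only on `ε`. -/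
theorem singular_abnormal_prob (ε : ℝ) (hε : 0 < ε) :
    ∃ C : ℝ, ∀ n : ℕ,
      unifProb (fun ω : UpIdx n → Bool =>
          (bmat n ω).det = 0 ∧ Abnormal (bmat n ω) ((n : ℝ) ^ (1 - ε)))
        ≤ C * (2 / 3 : ℝ) ^ n := by
  classical
  set K : ℕ → ℕ := fun n => Nat.ceil ((n : ℝ) ^ (1 - ε)) with hKdef
  set a : ℕ → ℝ := fun n =>
    (((K n + 1) * (n + 1) ^ K n : ℕ) : ℝ) ^ 2 * 4 ^ K n * (3 / 4 : ℝ) ^ n with hadef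
  set u : ℕ → ℝ := fun n => ((n : ℝ)) ^ (1 - ε) with hudef
  have hKu : ∀ n, (K n : ℝ) ≤ u n + 1 := fun n =>
    (Nat.ceil_lt_add_one (Real.rpow_nonneg (Nat.cast_nonneg n) _)).le
  set H : ℕ → ℝ := fun n =>
    (u n + 2) * (2 + 2 * Real.log ((n : ℝ) + 1) + Real.log 4)
      + (n : ℝ) * Real.log (3 / 4) with hHdef
  -- a n ≤ exp (H n)
  have hae : ∀ n, a n ≤ Real.exp (H n) := by
    intro n
    have hlog1 : (0 : ℝ) ≤ Real.log ((n : ℝ) + 1) :=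
      Real.log_nonneg (by push_cast; linarith [Nat.cast_nonneg (α := ℝ) n])
    have hlog4 : (0 : ℝ) ≤ Real.log 4 := Real.log_nonneg (by norm_num)
    have h1 : (((K n + 1) * (n + 1) ^ K n : ℕ) : ℝ)
        ≤ Real.exp ((K n : ℝ) + (K n : ℝ) * Real.log ((n : ℝ) + 1)) := by
      push_cast
      rw [Real.exp_add]
      apply mul_le_mul
      · exact (Real.add_one_le_exp _)
      · rw [show Real.exp ((K n : ℝ) * Real.log ((n : ℝ) + 1))
            = ((n : ℝ) + 1) ^ (K n) from by
          rw [Real.exp_nat_mul, Real.exp_log (by positivity)]]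
      · positivity
      · positivity
    have h2 : ((4 : ℝ)) ^ K n = Real.exp ((K n : ℝ) * Real.log 4) := by
      rw [Real.exp_nat_mul, Real.exp_log (by norm_num)]
    have h3 : ((3 / 4 : ℝ)) ^ n = Real.exp ((n : ℝ) * Real.log (3 / 4)) := by
      rw [Real.exp_nat_mul, Real.exp_log (by norm_num)]
    have hsq : (((K n + 1) * (n + 1) ^ K n : ℕ) : ℝ) ^ 2
        ≤ Real.exp ((K n : ℝ) + (K n : ℝ) * Real.log ((n : ℝ) + 1)) ^ 2 :=
      pow_le_pow_left₀ (Nat.cast_nonneg _) h1 2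
    calc a n ≤ Real.exp ((K n : ℝ) + (K n : ℝ) * Real.log ((n : ℝ) + 1)) ^ 2
          * 4 ^ K n * (3 / 4 : ℝ) ^ n := by
          apply mul_le_mul_of_nonneg_right _ (by positivity)
          exact mul_le_mul_of_nonneg_right hsq (by positivity)
      _ = Real.exp (2 * ((K n : ℝ) + (K n : ℝ) * Real.log ((n : ℝ) + 1))
            + (K n : ℝ) * Real.log 4 + (n : ℝ) * Real.log (3 / 4)) := by
          rw [h2, h3, ← Real.exp_nat_mul, ← Real.exp_add, ← Real.exp_add]
          norm_num
      _ ≤ Real.exp (H n) := by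
          apply Real.exp_le_exp.2
          have hK := hKu n
          have hu0 : (0 : ℝ) ≤ u n := Real.rpow_nonneg (Nat.cast_nonneg n) _
          rw [hHdef]
          nlinarith [hlog1, hlog4, hK, hu0]
  have ha0 : ∀ n, 0 ≤ a n := fun n => by positivity
  -- H tends to -infinity
  have hHtend : Tendsto H atTop atBot := by
    have hφ : Tendsto (fun n : ℕ =>
        ((u n + 2) * (2 + 2 * Real.log ((n : ℝ) + 1) + Real.log 4)) / (n : ℝ))
        atTop (𝓝 0) :=
      (phi_tendsto ε hε).comp tendsto_natCast_atTop_atTop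
    have hlog34 : Real.log (3 / 4) < 0 := Real.log_neg (by norm_num) (by norm_num)
    have hmono : ∀ᶠ n : ℕ in atTop, H n ≤ (n : ℝ) * (Real.log (3 / 4) / 2) := by
      have hev := hφ.eventually (eventually_le_nhds (show (0:ℝ) < -Real.log (3/4) / 2 by linarith))
      filter_upwards [hev, eventually_ge_atTop 1] with n hn hn1
      have hnpos : (0 : ℝ) < (n : ℝ) := by exact_mod_cast hn1
      have h1 : (u n + 2) * (2 + 2 * Real.log ((n : ℝ) + 1) + Real.log 4)
          ≤ (n : ℝ) * (-Real.log (3 / 4) / 2) := by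
        have := (div_le_iff₀ hnpos).1 hn
        linarith [this]
      rw [hHdef]
      nlinarith [h1]
    apply tendsto_atBot_mono' atTop hmono
    rw [tendsto_mul_const_atBot_of_neg (by linarith)]
    exact tendsto_natCast_atTop_atTop
  have haten : Tendsto a atTop (𝓝 0) := by
    apply tendsto_of_tendsto_of_tendsto_of_le_of_le
      (tendsto_const_nhds) (Real.tendsto_exp_atBot.comp hHtend) ha0 hae
  obtain ⟨C, hC⟩ := haten.bddAbove_range
  refine ⟨C, fun n => ?_⟩
  have hCn : a n ≤ C := hC (Set.mem_range_self n)
  calc unifProb (fun ω : UpIdx n → Bool =>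
          (bmat n ω).det = 0 ∧ Abnormal (bmat n ω) ((n : ℝ) ^ (1 - ε)))
      ≤ (((K n + 1) * (n + 1) ^ K n : ℕ) : ℝ) ^ 2 * 4 ^ K n * (1 / 2 : ℝ) ^ n :=
        main_bound n _
    _ = a n * (2 / 3 : ℝ) ^ n := by
        have h12 : ((3 / 4 : ℝ)) ^ n * (2 / 3 : ℝ) ^ n = (1 / 2 : ℝ) ^ n := by
          rw [← mul_pow]; norm_num
        rw [hadef, ← h12]
        ring
    _ ≤ C * (2 / 3 : ℝ) ^ n :=
        mul_le_mul_of_nonneg_right hCn (by positivity)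
end

section
/- Let N ≥ 1 and let A be a deterministic n×n real symmetric singular matrix that is normal with respect to N, i.e., whose rows admit no nontrivial vanishing linear combination with fewer than N nonzero coefficients. Let A' be the (n+1)×(n+1) symmetric matrix formed from A by appending as last column a random vector of length n+1 with i.i.d. entries uniform on {0,1}, and its transpose as the last row (the last entry of the vector serving as the new diagonal entry). Then P(rank(A') − rank(A) < 2) = O(N^{-1/2}), and hence P(rank(A') = rank(A) + 2) = 1 − O(N^{-1/2}), with an absolute implied constant. -/
set_option maxHeartbeats 1000000
set_option synthInstance.maxHeartbeats 1000000

open scoped Classical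

/-- A matrix is normal (w.r.t. the parameter `N`) if its rows admit no nontrivial vanishing
linear combination whose degree (number of nonzero coefficients) is less than `N`. -/
def IsNormalMat {n : ℕ} (M : Matrix (Fin n) (Fin n) ℝ) (N : ℝ) : Prop :=
  ∀ c : Fin n → ℝ, (∑ i, c i • M i) = 0 →
    ((Finset.univ.filter fun i => c i ≠ 0).card : ℝ) < N → c = 0

/-- The `(n+1) × (n+1)` symmetric matrix obtained from an `n × n` matrix `A` by appending the
vector `x` as the last column and its transpose as the last row (the last entry of `x` being
the new diagonal entry). -/
def augment {n : ℕ} (A : Matrix (Fin n) (Fin n) ℝ) (x : Fin (n + 1) → ℝ) :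
    Matrix (Fin (n + 1)) (Fin (n + 1)) ℝ :=
  Matrix.of fun i j =>
    if hi : (i : ℕ) < n then
      if hj : (j : ℕ) < n then A ⟨i, hi⟩ ⟨j, hj⟩ else x i
    else x j

lemma cb_sq (k : ℕ) : (2*k+1) * Nat.centralBinom k ^ 2 ≤ 16 ^ k := by
  induction k with
  | zero => simp [Nat.centralBinom]
  | succ k ih =>
    have h := Nat.succ_mul_centralBinom_succ k
    have key : (k+1)^2 * ((2*(k+1)+1) * Nat.centralBinom (k+1) ^ 2)
        ≤ (k+1)^2 * 16 ^ (k+1) := by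
      have e : (k+1)^2 * ((2*(k+1)+1) * Nat.centralBinom (k+1) ^ 2)
          = (2*k+3) * (2*(2*k+1))^2 * Nat.centralBinom k ^2 := by
        have : ((k+1) * Nat.centralBinom (k+1))^2 = (2*(2*k+1))^2 * Nat.centralBinom k ^2 := by
          rw [h]; ring
        nlinarith [this]
      rw [e]
      calc (2*k+3) * (2*(2*k+1))^2 * Nat.centralBinom k ^2
          = ((2*k+3) * (4*(2*k+1))) * ((2*k+1) * Nat.centralBinom k ^2) := by ring
        _ ≤ ((2*k+3) * (4*(2*k+1))) * 16 ^ k := Nat.mul_le_mul_left _ ih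
        _ ≤ ((k+1)^2 * 16) * 16 ^ k := Nat.mul_le_mul_right _ (by nlinarith)
        _ = (k+1)^2 * 16^(k+1) := by ring
    exact Nat.le_of_mul_le_mul_left key (by positivity)

lemma sq_to_sqrt (m j : ℕ) (h4 : m * j^2 ≤ 4^m) : (j:ℝ) * Real.sqrt m ≤ 2 ^ m := by
  have h2 : ((j:ℝ) * Real.sqrt m)^2 ≤ ((2:ℝ)^m)^2 := by
    have e1 : ((j:ℝ) * Real.sqrt m)^2 = ((j^2 * m : ℕ) : ℝ) := by
      push_cast
      rw [mul_pow, Real.sq_sqrt (by positivity)]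
    have e2 : ((2:ℝ)^m)^2 = ((4^m : ℕ) : ℝ) := by
      push_cast
      rw [← pow_mul, mul_comm, pow_mul]; norm_num
    rw [e1, e2]
    exact_mod_cast (by linarith [h4] : j^2 * m ≤ 4^m)
  exact (pow_le_pow_iff_left₀ (by positivity) (by positivity) two_ne_zero).mp h2

lemma choose_half (m : ℕ) : (m.choose (m/2) : ℝ) * Real.sqrt m ≤ 2 ^ m := by
  apply sq_to_sqrt
  rcases Nat.even_or_odd m with ⟨k, hk⟩ | ⟨k, hk⟩
  · subst hk
    have hd : (k+k)/2 = k := by omega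
    rw [hd]
    have hc : (k+k).choose k = Nat.centralBinom k := by
      rw [Nat.centralBinom]; congr 1; omega
    rw [hc]
    calc (k+k) * Nat.centralBinom k ^2 ≤ (2*k+1) * Nat.centralBinom k ^2 :=
          Nat.mul_le_mul_right _ (by omega)
      _ ≤ 16^k := cb_sq k
      _ ≤ 4^(k+k) := by
          rw [show (16:ℕ) = 4^2 by norm_num, ← pow_mul]
          exact Nat.pow_le_pow_right (by norm_num) (by omega)
  · subst hk
    have hd : (2*k+1)/2 = k := by omega
    rw [hd]
    have h2 : 2 * (2*k+1).choose k = Nat.centralBinom (k+1) := by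
      rw [Nat.centralBinom]
      have e : 2*(k+1) = (2*k+1) + 1 := by omega
      rw [e, Nat.choose_succ_succ']
      have e2 : (2*k+1).choose (k+1) = (2*k+1).choose k := by
        have := Nat.choose_symm (show k+1 ≤ 2*k+1 by omega)
        have e3 : 2*k+1 - (k+1) = k := by omega
        rw [e3] at this
        omega
      omega
    have h3 : 4 * ((2*k+1) * ((2*k+1).choose k)^2) ≤ 4 * 4^(2*k+1) := by
      calc 4 * ((2*k+1) * ((2*k+1).choose k)^2)
          = (2*k+1) * (2 * (2*k+1).choose k)^2 := by ring
        _ = (2*k+1) * Nat.centralBinom (k+1) ^2 := by rw [h2]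
        _ ≤ (2*(k+1)+1) * Nat.centralBinom (k+1) ^2 := Nat.mul_le_mul_right _ (by omega)
        _ ≤ 16^(k+1) := cb_sq (k+1)
        _ = 4 * 4^(2*k+1) := by
            rw [show (16:ℕ)=4^2 by norm_num, ← pow_mul]
            rw [show 2*(k+1) = (2*k+1)+1 by omega, pow_succ]
            ring
    have := Nat.le_of_mul_le_mul_left h3 (by norm_num)
    calc (2*k+1) * ((2*k+1).choose k)^2 ≤ 4^(2*k+1) := this
      _ ≤ 4^(2*k+1) := le_rfl



open Matrix Module LinearMap Finset

variable {n : ℕ} (A : Matrix (Fin n) (Fin n) ℝ) (x : Fin (n+1) → ℝ)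

lemma aug_cc (i j : Fin n) : augment A x i.castSucc j.castSucc = A i j := by
  simp only [augment, Matrix.of_apply, Fin.coe_castSucc]
  rw [dif_pos i.isLt, dif_pos j.isLt]

lemma aug_cl (i : Fin n) : augment A x i.castSucc (Fin.last n) = x i.castSucc := by
  simp only [augment, Matrix.of_apply, Fin.coe_castSucc, Fin.val_last]
  rw [dif_pos i.isLt, dif_neg (lt_irrefl n)]

lemma aug_l (j : Fin (n+1)) : augment A x (Fin.last n) j = x j := by
  simp only [augment, Matrix.of_apply, Fin.val_last]
  rw [dif_neg (lt_irrefl n)]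

/-- the projection dropping the last coordinate -/
noncomputable def projL (n : ℕ) : (Fin (n+1) → ℝ) →ₗ[ℝ] (Fin n → ℝ) :=
  LinearMap.funLeft ℝ ℝ Fin.castSucc

lemma proj_mulVec (v : Fin (n+1) → ℝ) :
    projL n (augment A x *ᵥ v) =
      A *ᵥ (v ∘ Fin.castSucc) + v (Fin.last n) • (fun i => x i.castSucc) := by
  funext i
  simp only [projL, LinearMap.funLeft_apply, Matrix.mulVec, dotProduct,
    Pi.add_apply, Pi.smul_apply, smul_eq_mul, Function.comp_apply]
  rw [Fin.sum_univ_castSucc]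
  simp only [aug_cc, aug_cl]
  ring_nf

lemma last_mulVec (v : Fin (n+1) → ℝ) :
    (augment A x *ᵥ v) (Fin.last n) = ∑ j, x j * v j := by
  simp only [Matrix.mulVec, dotProduct, aug_l]

lemma finrank_ker_projL : finrank ℝ (ker (projL n)) = 1 := by
  have hs : Function.Surjective (projL n) :=
    LinearMap.funLeft_surjective_of_injective ℝ ℝ _ (Fin.castSucc_injective n)
  have h := LinearMap.finrank_range_add_finrank_ker (projL n)
  rw [LinearMap.range_eq_top.mpr hs, finrank_top, Module.finrank_fintype_fun_eq_card,
    Module.finrank_fintype_fun_eq_card] at h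
  simp only [Fintype.card_fin] at h
  omega

lemma rank_augment_le : (augment A x).rank ≤ A.rank + 2 := by
  classical
  set B := augment A x with hB
  set V := LinearMap.range B.mulVecLin with hV
  set f := (projL n).comp V.subtype with hf
  have h1 : finrank ℝ (range f) + finrank ℝ (ker f) = finrank ℝ V :=
    LinearMap.finrank_range_add_finrank_ker f
  have hker : finrank ℝ (ker f) ≤ 1 := by
    have hmap : (ker f).map V.subtype ≤ ker (projL n) := by
      rintro y ⟨⟨z, hz⟩, hmem, rfl⟩
      simpa [hf] using hmem
    have he : finrank ℝ (ker f) = finrank ℝ ((ker f).map V.subtype) :=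
      (Submodule.equivMapOfInjective V.subtype (Submodule.injective_subtype V) (ker f)).finrank_eq
    rw [he]
    calc finrank ℝ ((ker f).map V.subtype) ≤ finrank ℝ (ker (projL n)) :=
          Submodule.finrank_mono hmap
      _ = 1 := finrank_ker_projL
  have hrange : finrank ℝ (range f) ≤ A.rank + 1 := by
    set W := LinearMap.range A.mulVecLin ⊔ (ℝ ∙ (fun i => x i.castSucc : Fin n → ℝ)) with hW
    have hrf : range f = V.map (projL n) := by
      rw [hf, LinearMap.range_comp, Submodule.range_subtype]
    have hle : V.map (projL n) ≤ W := by
      rintro y ⟨z, ⟨w, rfl⟩, rfl⟩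
      rw [Matrix.mulVecLin_apply, hB, proj_mulVec]
      exact Submodule.add_mem _
        (Submodule.mem_sup_left ⟨w ∘ Fin.castSucc, rfl⟩)
        (Submodule.mem_sup_right (Submodule.smul_mem _ _ (Submodule.mem_span_singleton_self _)))
    have hWle : finrank ℝ W ≤ A.rank + 1 := by
      have h2 := Submodule.finrank_sup_add_finrank_inf_eq
        (LinearMap.range A.mulVecLin) (ℝ ∙ (fun i => x i.castSucc : Fin n → ℝ))
      rw [← hW] at h2
      have h3 : finrank ℝ (ℝ ∙ (fun i => x i.castSucc : Fin n → ℝ)) ≤ 1 := by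
        by_cases hx0 : (fun i => x i.castSucc : Fin n → ℝ) = 0
        · rw [hx0, Submodule.span_zero_singleton]; simp
        · rw [finrank_span_singleton hx0]
      have h4 : Matrix.rank A = finrank ℝ (LinearMap.range A.mulVecLin) := rfl
      omega
    rw [hrf]
    exact le_trans (Submodule.finrank_mono hle) hWle
  have h5 : B.rank = finrank ℝ V := rfl
  show B.rank ≤ A.rank + 2
  omega

lemma rank_augment_ge (hA : A.IsSymm)
    (hx : (fun i => x i.castSucc) ∉ LinearMap.range A.mulVecLin) :
    A.rank + 2 ≤ (augment A x).rank := by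
  classical
  obtain ⟨f0, hf0x, hf0map⟩ :=
    Submodule.exists_dual_map_eq_bot_of_notMem hx inferInstance
  set c : Fin n → ℝ := fun j => f0 (fun k => if j = k then 1 else 0) with hc
  have hfv : ∀ v : Fin n → ℝ, f0 v = ∑ j, v j * c j := by
    intro v
    rw [LinearMap.pi_apply_eq_sum_univ f0 v]
    simp [hc, smul_eq_mul]
  have hzero : ∀ u : Fin n → ℝ, f0 (A *ᵥ u) = 0 := by
    intro u
    have : A *ᵥ u ∈ LinearMap.range A.mulVecLin := ⟨u, rfl⟩
    have h2 : f0 (A *ᵥ u) ∈ (LinearMap.range A.mulVecLin).map f0 :=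
      Submodule.mem_map_of_mem this
    rw [hf0map] at h2
    simpa using h2
  -- c ᵥ* A = 0, hence A *ᵥ c = 0 by symmetry
  have hcA : A *ᵥ c = 0 := by
    have hvm : c ᵥ* A = 0 := by
      funext j
      have := hzero (Pi.single j 1)
      rw [hfv] at this
      have he : ∀ k, (A *ᵥ Pi.single j 1) k = A k j := by
        intro k; rw [Matrix.mulVec_single]; simp
      simp only [he] at this
      simpa [Matrix.vecMul, dotProduct, mul_comm] using this
    calc A *ᵥ c = Aᵀ *ᵥ c := by rw [hA.eq]
      _ = c ᵥ* A := Matrix.mulVec_transpose A c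
      _ = 0 := hvm
  have hcx : ∑ j, x j.castSucc * c j ≠ 0 := by
    rw [← hfv]; exact hf0x
  set B := augment A x with hB
  set V := LinearMap.range B.mulVecLin with hV
  set f := (projL n).comp V.subtype with hf
  have h1 : finrank ℝ (range f) + finrank ℝ (ker f) = finrank ℝ V :=
    LinearMap.finrank_range_add_finrank_ker f
  -- the kernel is nontrivial
  have hker : 1 ≤ finrank ℝ (ker f) := by
    set z : Fin (n+1) → ℝ := B *ᵥ (Fin.snoc c 0) with hz
    have hzV : z ∈ V := ⟨Fin.snoc c 0, rfl⟩
    have hzlast : z (Fin.last n) ≠ 0 := by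
      rw [hz, hB, last_mulVec]
      rw [Fin.sum_univ_castSucc]
      simp only [Fin.snoc_castSucc, Fin.snoc_last, mul_zero, add_zero]
      exact hcx
    have hzker : projL n z = 0 := by
      rw [hz, hB, proj_mulVec]
      simp only [Fin.snoc_last, zero_smul, add_zero]
      have : (Fin.snoc c 0 : Fin (n+1) → ℝ) ∘ Fin.castSucc = c := by
        funext i; simp [Fin.snoc_castSucc]
      rw [this, hcA]
    have hnz : (⟨z, hzV⟩ : V) ≠ 0 := by
      intro h
      apply hzlast
      have : z = 0 := congrArg Subtype.val h
      rw [this]; rfl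
    have hmem : (⟨z, hzV⟩ : V) ∈ ker f := by
      simp only [hf, LinearMap.mem_ker, LinearMap.comp_apply, Submodule.coe_subtype]
      exact hzker
    have : Nontrivial (ker f) := ⟨⟨⟨⟨z, hzV⟩, hmem⟩, 0, by simpa using hnz⟩⟩
    exact (Module.finrank_pos_iff (R := ℝ)).mpr this
  -- the range contains the span of the columns of A and x
  have hrange : A.rank + 1 ≤ finrank ℝ (range f) := by
    set W := LinearMap.range A.mulVecLin ⊔ (ℝ ∙ (fun i => x i.castSucc : Fin n → ℝ)) with hW
    have hrf : range f = V.map (projL n) := by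
      rw [hf, LinearMap.range_comp, Submodule.range_subtype]
    have hle : W ≤ range f := by
      rw [hrf]
      apply sup_le
      · rintro y ⟨u, rfl⟩
        refine ⟨B *ᵥ (Fin.snoc u 0), ⟨Fin.snoc u 0, rfl⟩, ?_⟩
        rw [hB, proj_mulVec]
        simp only [Fin.snoc_last, zero_smul, add_zero]
        congr 1
        funext i; simp [Fin.snoc_castSucc]
      · rw [Submodule.span_singleton_le_iff_mem]
        refine ⟨B *ᵥ (Pi.single (Fin.last n) 1), ⟨Pi.single (Fin.last n) 1, rfl⟩, ?_⟩
        rw [hB, proj_mulVec]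
        have h6 : (Pi.single (Fin.last n) 1 : Fin (n+1) → ℝ) ∘ Fin.castSucc = 0 := by
          funext i
          simp [Pi.single_apply, (Fin.castSucc_lt_last i).ne]
        rw [h6]
        simp
    have hlt : LinearMap.range A.mulVecLin < W := by
      refine lt_of_le_of_ne le_sup_left (fun h => hx ?_)
      rw [h]
      exact Submodule.mem_sup_right (Submodule.mem_span_singleton_self _)
    have h7 : A.rank < finrank ℝ W := Submodule.finrank_lt_finrank_of_lt hlt
    have h8 : finrank ℝ W ≤ finrank ℝ (range f) := Submodule.finrank_mono hle
    omega
  have h5 : B.rank = finrank ℝ V := rfl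
  show A.rank + 2 ≤ B.rank
  omega

open Finset

lemma count_main {n : ℕ} (c : Fin n → ℝ) :
    (Finset.univ.filter (fun ω : Fin (n+1) → Bool =>
        ∑ i, c i * (if ω i.castSucc then (1:ℝ) else 0) = 0)).card
      * 2 ^ (Finset.univ.filter fun i => c i ≠ 0).card
    ≤ ((Finset.univ.filter fun i => c i ≠ 0).card.choose
        ((Finset.univ.filter fun i => c i ≠ 0).card / 2)) * 2 ^ (n+1) := by
  classical
  set S : Finset (Fin n) := Finset.univ.filter (fun i => c i ≠ 0) with hS
  set m := S.card with hm
  set F : Finset (Fin (n+1) → Bool) := Finset.univ.filter (fun ω =>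
      ∑ i, c i * (if ω i.castSucc then (1:ℝ) else 0) = 0) with hF
  -- sign-adjusted indicator
  set y : (Fin (n+1) → Bool) → Fin n → Bool :=
    fun ω i => if c i < 0 then !(ω i.castSucc) else ω i.castSucc with hy
  set φ : (Fin (n+1) → Bool) → Finset {i // i ∈ S} :=
    fun ω => S.attach.filter (fun i => y ω i = true) with hφ
  set K : ℝ := ∑ i ∈ S, (if c i < 0 then -c i else 0) with hK
  -- each ω in F gives sum K
  have hsum : ∀ ω ∈ F, ∑ i ∈ φ ω, |c i.1| = K := by
    intro ω hω
    have hω0 : ∑ i, c i * (if ω i.castSucc then (1:ℝ) else 0) = 0 :=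
      (Finset.mem_filter.mp hω).2
    have hres : ∑ i ∈ S, c i * (if ω i.castSucc then (1:ℝ) else 0) = 0 := by
      have e : ∑ i ∈ S, c i * (if ω i.castSucc then (1:ℝ) else 0)
          = ∑ i, c i * (if ω i.castSucc then (1:ℝ) else 0) := by
        apply Finset.sum_subset (Finset.subset_univ S)
        intro i _ hiS
        have hci : c i = 0 := by
          by_contra h
          exact hiS (Finset.mem_filter.mpr ⟨Finset.mem_univ i, h⟩)
        rw [hci]; ring
      rw [e]; exact hω0
    have key : ∀ i ∈ S, |c i| * (if y ω i then (1:ℝ) else 0)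
        = c i * (if ω i.castSucc then (1:ℝ) else 0) + (if c i < 0 then -c i else 0) := by
      intro i _
      by_cases h : c i < 0
      · rw [abs_of_neg h]
        simp only [hy, h, if_true]
        cases ω i.castSucc <;> simp <;> ring
      · rw [abs_of_nonneg (not_lt.mp h)]
        simp only [hy, h, if_false]
        cases ω i.castSucc <;> simp
    calc ∑ i ∈ φ ω, |c i.1|
        = ∑ i ∈ S.attach, (if y ω i.1 = true then |c i.1| else 0) := by
          rw [hφ, Finset.sum_filter]
      _ = ∑ i ∈ S, (if y ω i = true then |c i| else 0) := by
          rw [Finset.sum_attach S (fun i => if y ω i = true then |c i| else 0)]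
      _ = ∑ i ∈ S, |c i| * (if y ω i then (1:ℝ) else 0) := by
          apply Finset.sum_congr rfl; intro i _
          by_cases h : y ω i = true <;> simp [h]
      _ = ∑ i ∈ S, (c i * (if ω i.castSucc then (1:ℝ) else 0) + (if c i < 0 then -c i else 0)) :=
          Finset.sum_congr rfl key
      _ = K := by rw [Finset.sum_add_distrib, hres, zero_add, hK]
  -- the image family is an antichain
  set 𝒜 : Finset (Finset {i // i ∈ S}) := F.image φ with h𝒜
  have hanti : IsAntichain (· ⊆ ·) (𝒜 : Set (Finset {i // i ∈ S})) := by
    rintro T₁ hT₁ T₂ hT₂ hne hsub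
    obtain ⟨ω₁, hω₁, rfl⟩ := Finset.mem_image.mp hT₁
    obtain ⟨ω₂, hω₂, rfl⟩ := Finset.mem_image.mp hT₂
    obtain ⟨j, hj₂, hj₁⟩ := Finset.exists_of_ssubset (lt_of_le_of_ne hsub hne)
    have h1 := hsum ω₁ hω₁
    have h2 := hsum ω₂ hω₂
    have hpos : (0:ℝ) < |c j.1| := by
      have : c j.1 ≠ 0 := (Finset.mem_filter.mp j.2).2
      exact abs_pos.mpr this
    have hlt : ∑ i ∈ φ ω₁, |c i.1| < ∑ i ∈ φ ω₂, |c i.1| := by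
      apply Finset.sum_lt_sum_of_subset hsub hj₂ hj₁ hpos
      intro k _ _
      positivity
    rw [h1, h2] at hlt
    exact lt_irrefl _ hlt
  have hcard𝒜 : 𝒜.card ≤ m.choose (m / 2) := by
    have := IsAntichain.sperner hanti
    rwa [Fintype.card_coe] at this
  -- injection from F into 𝒜 × (functions on the complement of S)
  set S' : Finset (Fin (n+1)) := S.image Fin.castSucc with hS'
  have hcardS' : S'.card = m := Finset.card_image_of_injective _ (Fin.castSucc_injective n)
  have hinj : F.card ≤ (𝒜 ×ˢ (Finset.univ : Finset ({j // j ∈ S'ᶜ} → Bool))).card := by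
    apply Finset.card_le_card_of_injOn
      (fun ω => (φ ω, fun j : {j // j ∈ S'ᶜ} => ω j.1))
    · intro ω hω
      exact Finset.mem_product.mpr ⟨Finset.mem_image_of_mem φ hω, Finset.mem_univ _⟩
    · intro ω₁ hω₁ ω₂ hω₂ heq
      have hφeq : φ ω₁ = φ ω₂ := congrArg Prod.fst heq
      have hrest := congrArg Prod.snd heq
      funext j
      by_cases hj : j ∈ S'
      · obtain ⟨i, hiS, rfl⟩ := Finset.mem_image.mp hj
        have hmem : (⟨i, hiS⟩ : {i // i ∈ S}) ∈ φ ω₁ ↔ (⟨i, hiS⟩ : {i // i ∈ S}) ∈ φ ω₂ := by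
          rw [hφeq]
        simp only [hφ, Finset.mem_filter, Finset.mem_attach, true_and] at hmem
        simp only [hy] at hmem
        by_cases h : c i < 0
        · simp only [h, if_true, Bool.not_eq_true'] at hmem
          cases h1 : ω₁ i.castSucc <;> cases h2 : ω₂ i.castSucc <;>
            simp [h1, h2] at hmem ⊢ <;> tauto
        · simp only [h, if_false] at hmem
          cases h1 : ω₁ i.castSucc <;> cases h2 : ω₂ i.castSucc <;>
            simp [h1, h2] at hmem ⊢ <;> tauto
      · have hjc : j ∈ S'ᶜ := Finset.mem_compl.mpr hj
        exact congrFun hrest ⟨j, hjc⟩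
  have hcardprod : (𝒜 ×ˢ (Finset.univ : Finset ({j // j ∈ S'ᶜ} → Bool))).card
      = 𝒜.card * 2 ^ (n + 1 - m) := by
    rw [Finset.card_product, Finset.card_univ, Fintype.card_fun, Fintype.card_coe,
      Fintype.card_bool]
    congr 2
    rw [Finset.card_compl, hcardS', Fintype.card_fin]
  have hmle : m ≤ n + 1 := by
    calc m ≤ Finset.univ.card := Finset.card_le_card (Finset.subset_univ _)
      _ = n := Finset.card_fin n
      _ ≤ n + 1 := Nat.le_succ n
  calc F.card * 2 ^ m ≤ (𝒜.card * 2 ^ (n + 1 - m)) * 2 ^ m := by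
        rw [← hcardprod]
        exact Nat.mul_le_mul_right _ hinj
    _ = 𝒜.card * 2 ^ (n + 1 - m + m) := by rw [pow_add]; ring
    _ = 𝒜.card * 2 ^ (n + 1) := by rw [Nat.sub_add_cancel hmle]
    _ ≤ m.choose (m / 2) * 2 ^ (n + 1) := Nat.mul_le_mul_right _ hcard𝒜

lemma unifProb_eq_card {α : Type*} [Fintype α] (P : α → Prop) [D : DecidablePred P] :
    unifProb P = ((Finset.univ.filter P).card : ℝ) / (Fintype.card α : ℝ) := by
  unfold unifProb
  rw [Finset.filter_congr_decidable]

lemma flip_lemma {n : ℕ} (A : Matrix (Fin n) (Fin n) ℝ) :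
    Finset.univ.filter (fun ω : Fin (n+1) → Bool =>
          (augment A fun i => if ω i then 1 else 0).rank = A.rank + 2)
        = (Finset.univ.filter (fun ω : Fin (n+1) → Bool =>
          (augment A fun i => if ω i then 1 else 0).rank < A.rank + 2))ᶜ := by
  ext ω
  simp only [Finset.mem_filter, Finset.mem_compl, Finset.mem_univ, true_and]
  have h := rank_augment_le A (fun i => if ω i then (1:ℝ) else 0)
  omega

/-- Augmenting a singular normal symmetric matrix by a random `{0,1}` column and its transpose
increases the rank by exactly `2` with probability `1 - O(N^{-1/2})`, with an absolute
implied constant. -/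
theorem rank_increase_singular_normal :
    ∃ C : ℝ, ∀ (n : ℕ) (N : ℝ), 1 ≤ N →
      ∀ A : Matrix (Fin n) (Fin n) ℝ, A.IsSymm → A.det = 0 → IsNormalMat A N →
        unifProb (fun ω : Fin (n + 1) → Bool =>
            (augment A fun i => if ω i then 1 else 0).rank < A.rank + 2)
          ≤ C * N ^ (-(1 / 2 : ℝ)) ∧
        1 - C * N ^ (-(1 / 2 : ℝ)) ≤
          unifProb (fun ω : Fin (n + 1) → Bool =>
            (augment A fun i => if ω i then 1 else 0).rank = A.rank + 2) := by
  classical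
  use 1
  intro n N hN A hsymm hdet hnorm
  -- extract a kernel vector with large support
  obtain ⟨c, hc0, hcA⟩ := Matrix.exists_vecMul_eq_zero_iff.mpr hdet
  have hrowsum : ∑ i, c i • A i = 0 := by
    funext j
    have h1 : (c ᵥ* A) j = 0 := by rw [hcA]; rfl
    simpa [Matrix.vecMul, dotProduct, Finset.sum_apply, smul_eq_mul] using h1
  set S : Finset (Fin n) := Finset.univ.filter (fun i => c i ≠ 0) with hSdef
  set m := S.card with hmdef
  have hNm : N ≤ (m : ℝ) := by
    by_contra h
    push_neg at h
    exact hc0 (hnorm c hrowsum h)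
  have hm1 : 1 ≤ m := by exact_mod_cast le_trans hN hNm
  -- the events
  set E : Finset (Fin (n+1) → Bool) := Finset.univ.filter (fun ω =>
      (augment A fun i => if ω i then 1 else 0).rank < A.rank + 2) with hEdef
  set F : Finset (Fin (n+1) → Bool) := Finset.univ.filter (fun ω =>
      ∑ i, c i * (if ω i.castSucc then (1:ℝ) else 0) = 0) with hFdef
  have hsub : E ⊆ F := by
    intro ω hω
    have hlt := (Finset.mem_filter.mp hω).2
    set x : Fin (n+1) → ℝ := fun i => if ω i then 1 else 0 with hxdef
    have hxin : (fun i => x i.castSucc) ∈ LinearMap.range A.mulVecLin := by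
      by_contra hnot
      have := rank_augment_ge A x hsymm hnot
      omega
    obtain ⟨u, hu⟩ := hxin
    refine Finset.mem_filter.mpr ⟨Finset.mem_univ _, ?_⟩
    have h2 : ∑ i, c i * (if ω i.castSucc then (1:ℝ) else 0) = c ⬝ᵥ (A *ᵥ u) := by
      have h3 : A *ᵥ u = fun i => x i.castSucc := hu
      rw [h3]
      simp [dotProduct, hxdef]
    rw [h2, Matrix.dotProduct_mulVec, hcA, zero_dotProduct]
  -- cardinality bound
  have hcount := count_main c
  rw [← hSdef, ← hmdef, ← hFdef] at hcount
  have hchoose := choose_half m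
  -- real arithmetic
  have hD : (Fintype.card (Fin (n+1) → Bool) : ℝ) = 2 ^ (n+1) := by
    rw [Fintype.card_fun, Fintype.card_bool, Fintype.card_fin]
    push_cast
    ring
  have hsqrtN : (0:ℝ) < Real.sqrt N := Real.sqrt_pos.mpr (by linarith)
  have hsqrtm : (0:ℝ) < Real.sqrt m := Real.sqrt_pos.mpr (by positivity)
  have hNpow : N ^ (-(1/2 : ℝ)) = 1 / Real.sqrt N := by
    rw [Real.rpow_neg (by linarith), Real.sqrt_eq_rpow]
    exact (one_div _).symm
  have hP1 : unifProb (fun ω : Fin (n + 1) → Bool =>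
      (augment A fun i => if ω i then 1 else 0).rank < A.rank + 2) ≤ N ^ (-(1/2 : ℝ)) := by
    rw [hNpow]
    have hEF : (E.card : ℝ) ≤ F.card := by exact_mod_cast Finset.card_le_card hsub
    have hFc : (F.card : ℝ) * 2 ^ m ≤ (m.choose (m/2) : ℝ) * 2 ^ (n+1) := by
      exact_mod_cast hcount
    have step1 : unifProb (fun ω : Fin (n + 1) → Bool =>
        (augment A fun i => if ω i then 1 else 0).rank < A.rank + 2)
        = (E.card : ℝ) / 2 ^ (n+1) := by
      rw [unifProb_eq_card, hD, ← hEdef]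
    rw [step1]
    have h2m : (0:ℝ) < 2 ^ m := by positivity
    have h2n : (0:ℝ) < 2 ^ (n+1) := by positivity
    calc (E.card : ℝ) / 2 ^ (n+1) ≤ (F.card : ℝ) / 2 ^ (n+1) := by gcongr
      _ ≤ (m.choose (m/2) : ℝ) / 2 ^ m := by
          rw [div_le_div_iff₀ h2n h2m]
          exact hFc
      _ ≤ 1 / Real.sqrt m := by
          rw [div_le_div_iff₀ h2m hsqrtm]
          calc (m.choose (m/2) : ℝ) * Real.sqrt m ≤ 2 ^ m := hchoose
            _ = 1 * 2 ^ m := (one_mul _).symm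
      _ ≤ 1 / Real.sqrt N := by
          apply one_div_le_one_div_of_le hsqrtN
          exact Real.sqrt_le_sqrt hNm
  constructor
  · rw [one_mul]; exact hP1
  · rw [one_mul]
    have hEle : (Finset.univ.filter (fun ω : Fin (n+1) → Bool =>
        (augment A fun i => if ω i then 1 else 0).rank < A.rank + 2)).card
        ≤ Fintype.card (Fin (n+1) → Bool) := by
      rw [← Finset.card_univ]
      exact Finset.card_filter_le _ _
    have hflip := flip_lemma A
    have hunif2 : unifProb (fun ω : Fin (n + 1) → Bool =>
        (augment A fun i => if ω i then 1 else 0).rank = A.rank + 2)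
        = 1 - unifProb (fun ω : Fin (n + 1) → Bool =>
        (augment A fun i => if ω i then 1 else 0).rank < A.rank + 2) := by
      rw [unifProb_eq_card, unifProb_eq_card, hflip, Finset.card_compl,
        Nat.cast_sub hEle, hD, sub_div, div_self (by positivity)]
    rw [hunif2]
    linarith
end

section
/- Fix ε > 0 and set N = n^{1-ε}. Let Q_n be a random symmetric n×n matrix whose upper-diagonal entries are i.i.d. Bernoulli random variables taking values 0 and 1 with probability 1/2. Then the probability that Q_n is nonsingular and imperfect (i.e., some row of Q_n is bad) is O((2/3)^n), with implied constant depending only on ε. -/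
open scoped Classical

/-- Row `i` of `M` is good (w.r.t. the parameter `N`) if deleting it yields an `(n-1) × n`
matrix whose `n` columns admit a nontrivial vanishing linear combination with at least `N`
nonzero coefficients. -/
def GoodRow {n : ℕ} (M : Matrix (Fin n) (Fin n) ℝ) (N : ℝ) (i : Fin n) : Prop :=
  ∃ c : Fin n → ℝ, c ≠ 0 ∧ (∀ k, k ≠ i → (∑ j, c j * M k j) = 0) ∧
    N ≤ ((Finset.univ.filter fun j => c j ≠ 0).card : ℝ)

/-!
If row `i` is bad, every null vector `c` of the other rows has support `S` with `|S| < N`. The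
rows outside `{i} ∪ S`, restricted to the columns `S`, are spanned by at most `|S|` of them,
forming a set `D`; so `c` may be taken to be a function of the block `D × S` alone, and it is then
orthogonal to every row `k ∉ {i} ∪ S ∪ D`. Fix `j` with `c j ≠ 0`. The entries `(k, j)` of these
rows lie outside the block `D × S`, and flipping any of them leaves `c` unchanged but destroys the
orthogonality of row `k`. Hence the event has probability at most `2^{-(n - 2N - 1)}`, and a union
bound over the `n^{O(N)}` triples `(i, S, D)` gives `n^{O(n^{1-ε})} 2^{-n} = O((2/3)^n)`.
-/

open Finset Filter Asymptotics Topology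
open scoped symmDiff

theorem unifProb_mono {α : Type*} [Fintype α] {P Q : α → Prop} (h : ∀ a, P a → Q a) :
    unifProb P ≤ unifProb Q := by
  unfold unifProb
  gcongr ?_ / _
  exact_mod_cast card_le_card (monotone_filter_right _ fun a _ => h a)

theorem unifProb_le_sum {α ι : Type*} [Fintype α] {P : α → Prop} (s : Finset ι)
    (Q : ι → α → Prop) (h : ∀ a, P a → ∃ t ∈ s, Q t a) :
    unifProb P ≤ ∑ t ∈ s, unifProb (Q t) := by
  unfold unifProb
  rw [← sum_div]
  gcongr
  calc (#(univ.filter P) : ℝ) ≤ #(s.biUnion fun t => univ.filter (Q t)) := by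
        gcongr
        intro a ha
        simpa using h a (by simpa using ha)
    _ ≤ ∑ t ∈ s, (#(univ.filter (Q t)) : ℝ) := by exact_mod_cast card_biUnion_le

theorem card_filter_card_le_le_pow (α : Type*) [Fintype α] (N : ℕ) :
    #(univ.filter fun S : Finset α => #S ≤ N) ≤ (Fintype.card α + 1) ^ N := by
  calc #(univ.filter fun S : Finset α => #S ≤ N)
      ≤ #((range (N + 1)).biUnion fun s => powersetCard s (univ : Finset α)) :=
        card_le_card fun S hS => mem_biUnion.2 ⟨#S,
          mem_range.2 (Nat.lt_succ_of_le (mem_filter.1 hS).2),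
          mem_powersetCard.2 ⟨subset_univ _, rfl⟩⟩
    _ ≤ ∑ s ∈ range (N + 1), #(powersetCard s (univ : Finset α)) := card_biUnion_le
    _ ≤ ∑ s ∈ range (N + 1), Fintype.card α ^ s * 1 ^ (N - s) * N.choose s :=
        sum_le_sum fun s hs => by
          rw [card_powersetCard, card_univ, one_pow, mul_one]
          exact (Nat.choose_le_pow _ _).trans
            (Nat.le_mul_of_pos_right _ (Nat.choose_pos (Nat.lt_succ_iff.1 (mem_range.1 hs))))
    _ = (Fintype.card α + 1) ^ N := (add_pow _ _ _).symm

theorem half_pow_le_two_pow_mul_half_pow {k m n : ℕ} (h : n ≤ k + m) :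
    (1 / 2 : ℝ) ^ k ≤ 2 ^ m * (1 / 2) ^ n :=
  calc (1 / 2 : ℝ) ^ k = 2 ^ m * (1 / 2) ^ (k + m) := by
        rw [pow_add, mul_left_comm, ← mul_pow]; norm_num
    _ ≤ 2 ^ m * (1 / 2) ^ n :=
        mul_le_mul_of_nonneg_left (pow_le_pow_of_le_one (by norm_num) (by norm_num) h)
          (by positivity)

section Flip

variable {ι : Type*} [DecidableEq ι]

def flipOn (b : Finset ι) (ω : ι → Bool) : ι → Bool := fun p => xor (ω p) (decide (p ∈ b))

theorem flipOn_apply_of_notMem {b : Finset ι} {p : ι} (h : p ∉ b) (ω : ι → Bool) :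
    flipOn b ω p = ω p := by
  simp [flipOn, h]

theorem flipOn_apply_of_mem {b : Finset ι} {p : ι} (h : p ∈ b) (ω : ι → Bool) :
    flipOn b ω p = !ω p := by
  simp [flipOn, h]

theorem flipOn_flipOn (b b' : Finset ι) (ω : ι → Bool) :
    flipOn b (flipOn b' ω) = flipOn (b' ∆ b) ω := by
  funext p
  by_cases hb : p ∈ b <;> by_cases hb' : p ∈ b' <;> simp [flipOn, mem_symmDiff, hb, hb']

theorem flipOn_empty (ω : ι → Bool) : flipOn ∅ ω = ω := by
  funext p
  simp [flipOn]

theorem flipOn_flipOn_self (b : Finset ι) (ω : ι → Bool) : flipOn b (flipOn b ω) = ω := by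
  rw [flipOn_flipOn, symmDiff_self, bot_eq_empty, flipOn_empty]

variable [Fintype ι]

theorem card_mul_two_pow_le_of_flipOn (A : Finset (ι → Bool)) (F : (ι → Bool) → Finset ι)
    (m : ℕ) (hm : ∀ ω ∈ A, m ≤ #(F ω))
    (hF : ∀ ω ∈ A, ∀ b ⊆ F ω, F (flipOn b ω) = F ω)
    (hA : ∀ ω ∈ A, ∀ b ⊆ F ω, flipOn b ω ∈ A → b = ∅) :
    #A * 2 ^ m ≤ 2 ^ Fintype.card ι := by
  have hinj : Set.InjOn (fun x : (_ : ι → Bool) × Finset ι => flipOn x.2 x.1)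
      (A.sigma fun ω => (F ω).powerset) := by
    rintro ⟨ω, b⟩ h ⟨ω', b'⟩ h' heq
    simp only [coe_sigma, Set.mem_sigma_iff, mem_coe, mem_powerset] at h h' heq
    have hFF : F ω' = F ω := by rw [← hF ω' h'.1 b' h'.2, ← heq, hF ω h.1 b h.2]
    have hω' : ω' = flipOn (b ∆ b') ω := by rw [← flipOn_flipOn, heq, flipOn_flipOn_self]
    have hsub : b ∆ b' ⊆ F ω := symmDiff_le_sup.trans (union_subset h.2 (hFF ▸ h'.2))
    have hbb : b = b' := symmDiff_eq_bot.1 (hA ω h.1 _ hsub (hω' ▸ h'.1))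
    subst hbb
    rw [symmDiff_self, bot_eq_empty, flipOn_empty] at hω'
    rw [hω']
  calc #A * 2 ^ m = ∑ ω ∈ A, 2 ^ m := by rw [sum_const, smul_eq_mul]
    _ ≤ ∑ ω ∈ A, #(F ω).powerset := sum_le_sum fun ω hω => by
        rw [card_powerset]; exact Nat.pow_le_pow_right two_pos (hm ω hω)
    _ = #(A.sigma fun ω => (F ω).powerset) := (card_sigma _ _).symm
    _ ≤ #(univ : Finset (ι → Bool)) :=
        card_le_card_of_injOn _ (fun _ _ => mem_coe.2 (mem_univ _)) hinj
    _ = 2 ^ Fintype.card ι := by simp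

theorem unifProb_le_half_pow_of_flipOn (P : (ι → Bool) → Prop) (F : (ι → Bool) → Finset ι)
    (m : ℕ) (hm : ∀ ω, P ω → m ≤ #(F ω))
    (hF : ∀ ω, P ω → ∀ b ⊆ F ω, F (flipOn b ω) = F ω)
    (hP : ∀ ω, P ω → ∀ b ⊆ F ω, P (flipOn b ω) → b = ∅) :
    unifProb P ≤ (1 / 2) ^ m := by
  have hcard := card_mul_two_pow_le_of_flipOn (univ.filter P) F m
    (fun ω hω => hm ω (mem_filter.1 hω).2) (fun ω hω => hF ω (mem_filter.1 hω).2)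
    (fun ω hω b hb hb' => hP ω (mem_filter.1 hω).2 b hb (mem_filter.1 hb').2)
  rw [unifProb, Fintype.card_fun, Fintype.card_bool, one_div_pow,
    div_le_div_iff₀ (by positivity) (by positivity), one_mul]
  exact_mod_cast hcard

end Flip

theorem exists_subset_card_le_finrank_forall_mem_span {K V ι : Type*} [Field K]
    [AddCommGroup V] [Module K V] [FiniteDimensional K V] (v : ι → V) (R : Finset ι) :
    ∃ D ⊆ R, #D ≤ Module.finrank K V ∧ ∀ k ∈ R, v k ∈ Submodule.span K (v '' D) := by
  obtain ⟨t, hts, htcard, hspan, -⟩ := Submodule.exists_finset_span_eq_linearIndepOn K (v '' R)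
  obtain ⟨D, hDR, hinj, rfl⟩ := exists_subset_injOn_image_eq_of_surjOn (R : Set ι) t hts
  refine ⟨D, by exact_mod_cast hDR, ?_, fun k hk => ?_⟩
  · rw [← card_image_of_injOn hinj, htcard]
    exact Submodule.finrank_le _
  · rw [← coe_image, hspan]
    exact Submodule.subset_span (Set.mem_image_of_mem v hk)

theorem dotProduct_eq_add_of_forall_ne {ι R : Type*} [Fintype ι] [CommRing R] {u w : ι → R}
    {j : ι} (h : ∀ l ≠ j, u l = w l) (c : ι → R) :
    c ⬝ᵥ u = c ⬝ᵥ w + c j * (u j - w j) := by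
  rw [← sub_eq_iff_eq_add', ← dotProduct_sub]
  exact sum_eq_single j (fun l _ hl => by simp [h l hl]) (by simp)

section NullVec

variable {m κ K : Type*} [Fintype κ] [Field K]

def IsNullVec (S : Finset κ) (R : Finset m) (M : Matrix m κ K) (c : κ → K) : Prop :=
  c ≠ 0 ∧ (∀ j ∉ S, c j = 0) ∧ ∀ k ∈ R, c ⬝ᵥ M k = 0

/-- Chosen by `Classical.epsilon`, so it depends on `M` only through the predicate
`IsNullVec S D M`, that is, only through the block `D × S`. -/
noncomputable def nullVec (S : Finset κ) (D : Finset m) (M : Matrix m κ K) : κ → K :=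
  Classical.epsilon (IsNullVec S D M)

theorem isNullVec_nullVec {S : Finset κ} {D : Finset m} {M : Matrix m κ K}
    (h : ∃ c, IsNullVec S D M c) : IsNullVec S D M (nullVec S D M) :=
  Classical.epsilon_spec h

theorem dotProduct_eq_sum_subtype {S : Finset κ} {c : κ → K} (hc : ∀ j ∉ S, c j = 0)
    (u : κ → K) : c ⬝ᵥ u = ∑ j : S, c j * u j := by
  rw [dotProduct, sum_coe_sort S fun j => c j * u j]
  exact (sum_subset (subset_univ S) fun j _ hj => by rw [hc j hj, zero_mul]).symm

theorem nullVec_congr {S : Finset κ} {D : Finset m} {M M' : Matrix m κ K}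
    (h : ∀ k ∈ D, ∀ j ∈ S, M k j = M' k j) : nullVec S D M = nullVec S D M' := by
  suffices IsNullVec S D M = IsNullVec S D M' by rw [nullVec, nullVec, this]
  ext c
  refine and_congr_right fun _ => and_congr_right fun hc => forall₂_congr fun k hk => ?_
  simp only [dotProduct_eq_sum_subtype hc, h k hk _ (Subtype.prop _)]

theorem exists_subset_card_le_forall_dotProduct_eq_zero (M : Matrix m κ K) (S : Finset κ)
    (R : Finset m) :
    ∃ D ⊆ R, #D ≤ #S ∧ ∀ c : κ → K, (∀ j ∉ S, c j = 0) →
      (∀ k ∈ D, c ⬝ᵥ M k = 0) → ∀ k ∈ R, c ⬝ᵥ M k = 0 := by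
  obtain ⟨D, hDR, hDcard, hspan⟩ :=
    exists_subset_card_le_finrank_forall_mem_span (K := K) (fun k (j : S) => M k j) R
  rw [Module.finrank_fintype_fun_eq_card, Fintype.card_coe] at hDcard
  refine ⟨D, hDR, hDcard, fun c hc hD k hk => ?_⟩
  let f := dotProductEquiv K S fun j => c j
  have hf : ∀ k', c ⬝ᵥ M k' = f fun j => M k' j := fun k' => dotProduct_eq_sum_subtype hc _
  have hker : Submodule.span K ((fun k (j : S) => M k j) '' D) ≤ LinearMap.ker f :=
    Submodule.span_le.2 <| by
      rintro _ ⟨k', hk', rfl⟩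
      exact (hf k').symm.trans (hD k' hk')
  exact (hf k).trans (hker (hspan k hk))

end NullVec

theorem exists_ne_zero_forall_dotProduct_eq_zero {m K : Type*} [Fintype m] [DecidableEq m]
    [Field K] (M : Matrix m m K) (i : m) : ∃ c : m → K, c ≠ 0 ∧ ∀ k ≠ i, c ⬝ᵥ M k = 0 := by
  obtain ⟨c, hc0, hc⟩ := Matrix.exists_mulVec_eq_zero_iff.2
    (Matrix.det_eq_zero_of_row_eq_zero i fun j => by simp : (M.updateRow i 0).det = 0)
  refine ⟨c, hc0, fun k hk => ?_⟩
  simpa [Matrix.mulVec, Matrix.updateRow_ne hk, dotProduct_comm] using congrFun hc k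

theorem exists_isNullVec_nullVec_of_not_goodRow {n : ℕ} {M : Matrix (Fin n) (Fin n) ℝ} {x : ℝ}
    {i : Fin n} (h : ¬ GoodRow M x i) :
    ∃ S D : Finset (Fin n), (#S : ℝ) < x ∧ #D ≤ #S ∧
      IsNullVec S (insert i S)ᶜ M (nullVec S D M) := by
  obtain ⟨c, hc0, hc⟩ := exists_ne_zero_forall_dotProduct_eq_zero M i
  set S := univ.filter fun j => c j ≠ 0
  have hS : (#S : ℝ) < x := not_le.1 fun hx => h ⟨c, hc0, hc, hx⟩
  have hcS : ∀ j ∉ S, c j = 0 := fun j hj => by simpa [S] using hj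
  obtain ⟨D, hDR, hDS, hD⟩ := exists_subset_card_le_forall_dotProduct_eq_zero M S (insert i S)ᶜ
  have hDi : ∀ k ∈ D, k ≠ i := fun k hk hki => by simpa [hki] using hDR hk
  obtain ⟨hc0', hcS', hcD⟩ := isNullVec_nullVec ⟨c, hc0, hcS, fun k hk => hc k (hDi k hk)⟩
  exact ⟨S, D, hS, hDS, hc0', hcS', hD _ hcS' hcD⟩

theorem tendsto_exp_mul_pow_of_isLittleO {u : ℕ → ℝ} (hu : u =o[atTop] fun n => (n : ℝ))
    {r : ℝ} (hr0 : 0 < r) (hr1 : r < 1) :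
    Tendsto (fun n => Real.exp (u n) * r ^ n) atTop (𝓝 0) := by
  have h : Tendsto (fun n : ℕ => (n : ℝ) * (u n / n + Real.log r)) atTop atBot :=
    tendsto_natCast_atTop_atTop.atTop_mul_neg (Real.log_neg hr0 hr1)
      (by simpa using hu.tendsto_div_nhds_zero.add_const (Real.log r))
  refine (Real.tendsto_exp_atBot.comp h).congr' ?_
  filter_upwards [eventually_ne_atTop 0] with n hn
  rw [Function.comp_apply, mul_add, mul_div_cancel₀ _ (Nat.cast_ne_zero.2 hn), Real.exp_add,
    Real.exp_nat_mul, Real.exp_log hr0]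

theorem isLittleO_log_two_mul_add_two {δ : ℝ} (hδ : 0 < δ) :
    (fun n : ℕ => Real.log (2 * n + 2)) =o[atTop] fun n : ℕ => (n : ℝ) ^ δ := by
  have h2 : Tendsto (fun n : ℕ => (2 * n + 2 : ℝ)) atTop atTop :=
    tendsto_atTop_add_const_right _ 2 (tendsto_natCast_atTop_atTop.const_mul_atTop two_pos)
  refine ((isLittleO_log_rpow_atTop hδ).comp_tendsto h2).trans_isBigO <| IsBigO.of_bound (4 ^ δ) ?_
  filter_upwards [eventually_ge_atTop 1] with n hn
  have hn' : (1 : ℝ) ≤ n := by exact_mod_cast hn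
  rw [Function.comp_apply, Real.norm_of_nonneg (by positivity),
    Real.norm_of_nonneg (by positivity), ← Real.mul_rpow (by norm_num) (by positivity)]
  exact Real.rpow_le_rpow (by positivity) (by linarith) hδ.le

theorem isLittleO_floor_rpow_mul_log {ε : ℝ} (hε : 0 < ε) :
    (fun n : ℕ => ((2 * ⌊(n : ℝ) ^ (1 - ε)⌋₊ + 1 : ℕ) : ℝ) * Real.log (2 * n + 2))
      =o[atTop] fun n => (n : ℝ) := by
  have hfloor :
      (fun n : ℕ => (⌊(n : ℝ) ^ (1 - ε)⌋₊ : ℝ)) =O[atTop] fun n : ℕ => (n : ℝ) ^ (1 - ε) :=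
    IsBigO.of_bound 1 <| Eventually.of_forall fun n => by
      rw [one_mul, Real.norm_of_nonneg (Nat.cast_nonneg _), Real.norm_of_nonneg (by positivity)]
      exact Nat.floor_le (by positivity)
  have hmain : (fun n : ℕ => (⌊(n : ℝ) ^ (1 - ε)⌋₊ : ℝ) * Real.log (2 * n + 2))
      =o[atTop] fun n => (n : ℝ) := by
    refine (hfloor.mul_isLittleO (isLittleO_log_two_mul_add_two hε)).congr' EventuallyEq.rfl ?_
    filter_upwards [eventually_ne_atTop 0] with n hn
    rw [← Real.rpow_add (Nat.cast_pos.2 (Nat.pos_of_ne_zero hn)), sub_add_cancel, Real.rpow_one]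
  have hlog := isLittleO_log_two_mul_add_two one_pos
  simp only [Real.rpow_one] at hlog
  refine ((hmain.const_mul_left 2).add hlog).congr_left fun n => ?_
  push_cast
  ring

theorem tendsto_pow_floor_rpow_mul_pow {ε : ℝ} (hε : 0 < ε) {r : ℝ} (hr0 : 0 < r) (hr1 : r < 1) :
    Tendsto (fun n : ℕ => (2 * n + 2 : ℝ) ^ (2 * ⌊(n : ℝ) ^ (1 - ε)⌋₊ + 1) * r ^ n)
      atTop (𝓝 0) := by
  refine (tendsto_exp_mul_pow_of_isLittleO (isLittleO_floor_rpow_mul_log hε) hr0 hr1).congr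
    fun n => ?_
  rw [Real.exp_nat_mul, Real.exp_log (by positivity)]

namespace SymmBernoulli

variable {n : ℕ}

def upIdx (k l : Fin n) : UpIdx n := Sym2.sortEquiv s(k, l)

theorem upIdx_eq_upIdx_iff {a b c d : Fin n} :
    upIdx a b = upIdx c d ↔ a = c ∧ b = d ∨ a = d ∧ b = c :=
  Sym2.sortEquiv.injective.eq_iff.trans Sym2.eq_iff

theorem upIdx_left_injective (j : Fin n) : Function.Injective (upIdx · j) := fun a b h => by
  rcases upIdx_eq_upIdx_iff.1 h with ⟨h, -⟩ | ⟨rfl, rfl⟩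
  exacts [h, rfl]

theorem upIdx_mem_image_iff {K : Finset (Fin n)} {j k l : Fin n} :
    upIdx k l ∈ K.image (upIdx · j) ↔ k ∈ K ∧ l = j ∨ l ∈ K ∧ k = j := by
  simp only [mem_image, upIdx_eq_upIdx_iff]
  constructor
  · rintro ⟨a, ha, ⟨rfl, rfl⟩ | ⟨rfl, rfl⟩⟩
    exacts [Or.inl ⟨ha, rfl⟩, Or.inr ⟨ha, rfl⟩]
  · rintro (⟨hk, rfl⟩ | ⟨hl, rfl⟩)
    exacts [⟨k, hk, Or.inl ⟨rfl, rfl⟩⟩, ⟨l, hl, Or.inr ⟨rfl, rfl⟩⟩]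

theorem bmat_apply (ω : UpIdx n → Bool) (k l : Fin n) :
    bmat n ω k l = if ω (upIdx k l) then 1 else 0 := rfl

theorem bmat_flipOn_of_notMem {b : Finset (UpIdx n)} {k l : Fin n} (h : upIdx k l ∉ b)
    (ω : UpIdx n → Bool) : bmat n (flipOn b ω) k l = bmat n ω k l := by
  rw [bmat_apply, bmat_apply, flipOn_apply_of_notMem h]

theorem bmat_flipOn_sub_ne_zero {b : Finset (UpIdx n)} {k l : Fin n} (h : upIdx k l ∈ b)
    (ω : UpIdx n → Bool) : bmat n (flipOn b ω) k l - bmat n ω k l ≠ 0 := by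
  rw [bmat_apply, bmat_apply, flipOn_apply_of_mem h]
  cases ω (upIdx k l) <;> norm_num

variable {S R D : Finset (Fin n)} {j : Fin n} {b : Finset (UpIdx n)}

theorem nullVec_bmat_flipOn (hRS : Disjoint R S) (hb : b ⊆ (R \ D).image (upIdx · j))
    (ω : UpIdx n → Bool) :
    nullVec S D (bmat n (flipOn b ω)) = nullVec S D (bmat n ω) := by
  refine nullVec_congr fun k hk l hl => bmat_flipOn_of_notMem (fun hkl => ?_) ω
  rcases upIdx_mem_image_iff.1 (hb hkl) with ⟨hk', -⟩ | ⟨hl', -⟩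
  · exact (mem_sdiff.1 hk').2 hk
  · exact disjoint_left.1 hRS (mem_sdiff.1 hl').1 hl

theorem dotProduct_bmat_flipOn (hRS : Disjoint R S) (hj : j ∈ S)
    (hb : b ⊆ (R \ D).image (upIdx · j)) {k : Fin n} (hk : k ∈ R \ D) (ω : UpIdx n → Bool)
    (c : Fin n → ℝ) :
    c ⬝ᵥ bmat n (flipOn b ω) k
      = c ⬝ᵥ bmat n ω k + c j * (bmat n (flipOn b ω) k j - bmat n ω k j) := by
  refine dotProduct_eq_add_of_forall_ne (fun l hl => bmat_flipOn_of_notMem (fun hkl => ?_) ω) c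
  rcases upIdx_mem_image_iff.1 (hb hkl) with ⟨-, rfl⟩ | ⟨-, rfl⟩
  · exact hl rfl
  · exact disjoint_left.1 hRS (mem_sdiff.1 hk).1 hj

noncomputable def pivot [NeZero n] (c : Fin n → ℝ) : Fin n := Classical.epsilon (c · ≠ 0)

theorem pivot_spec [NeZero n] {c : Fin n → ℝ} (hc : c ≠ 0) : c (pivot c) ≠ 0 :=
  Classical.epsilon_spec (Function.ne_iff.1 hc)

theorem unifProb_isNullVec_nullVec_le [NeZero n] (hRS : Disjoint R S) :
    unifProb (fun ω => IsNullVec S R (bmat n ω) (nullVec S D (bmat n ω)))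
      ≤ (1 / 2) ^ #(R \ D) := by
  set F := fun ω => (R \ D).image (upIdx · (pivot (nullVec S D (bmat n ω))))
  have hflip_nullVec : ∀ ω, ∀ b ⊆ F ω,
      nullVec S D (bmat n (flipOn b ω)) = nullVec S D (bmat n ω) := fun ω b hb =>
    nullVec_bmat_flipOn hRS hb ω
  refine unifProb_le_half_pow_of_flipOn _ F _
    (fun ω _ => (card_image_of_injective _ (upIdx_left_injective _)).ge)
    (fun ω _ b hb => by simp only [F, hflip_nullVec ω b hb]) fun ω hω b hb hflip => ?_
  obtain ⟨hc0, hcS, hcR⟩ := hω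
  have hjS : pivot (nullVec S D (bmat n ω)) ∈ S := by_contra fun hj => pivot_spec hc0 (hcS _ hj)
  refine eq_empty_of_forall_notMem fun p hp => ?_
  obtain ⟨k, hk, rfl⟩ := mem_image.1 (hb hp)
  have hk0 := hflip.2.2 k (mem_sdiff.1 hk).1
  rw [hflip_nullVec ω b hb, dotProduct_bmat_flipOn hRS hjS hb hk, hcR k (mem_sdiff.1 hk).1,
    zero_add] at hk0
  exact mul_ne_zero (pivot_spec hc0) (bmat_flipOn_sub_ne_zero hp ω) hk0

theorem unifProb_isNullVec_compl_insert_le {N : ℕ} (i : Fin n) (hS : #S ≤ N) (hD : #D ≤ N) :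
    unifProb (fun ω => IsNullVec S (insert i S)ᶜ (bmat n ω) (nullVec S D (bmat n ω)))
      ≤ 2 ^ (2 * N + 1) * (1 / 2) ^ n := by
  have : NeZero n := NeZero.of_pos i.pos
  refine (unifProb_isNullVec_nullVec_le (disjoint_compl_left.mono_right
    (subset_insert i S))).trans (half_pow_le_two_pow_mul_half_pow ?_)
  have := card_compl (insert i S)
  have := card_insert_le i S
  have := le_card_sdiff D (insert i S)ᶜ
  have := card_le_univ (insert i S)
  rw [Fintype.card_fin] at *
  omega

theorem unifProb_exists_not_goodRow_le (x : ℝ) :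
    unifProb (fun ω : UpIdx n → Bool => ∃ i, ¬ GoodRow (bmat n ω) x i)
      ≤ (2 * n + 2 : ℝ) ^ (2 * ⌊x⌋₊ + 1) * (1 / 2) ^ n := by
  set N := ⌊x⌋₊
  set fam := (univ : Finset (Finset (Fin n))).filter (#· ≤ N)
  set triples := (univ : Finset (Fin n)) ×ˢ fam ×ˢ fam
  let E (t : Fin n × Finset (Fin n) × Finset (Fin n)) (ω : UpIdx n → Bool) : Prop :=
    IsNullVec t.2.1 (insert t.1 t.2.1)ᶜ (bmat n ω) (nullVec t.2.1 t.2.2 (bmat n ω))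
  have hcover : ∀ ω, (∃ i, ¬ GoodRow (bmat n ω) x i) → ∃ t ∈ triples, E t ω := by
    rintro ω ⟨i, hi⟩
    obtain ⟨S, D, hS, hDS, hnull⟩ := exists_isNullVec_nullVec_of_not_goodRow hi
    have hSN : #S ≤ N := Nat.le_floor hS.le
    exact ⟨(i, S, D), by simp [triples, fam, hSN, hDS.trans hSN], hnull⟩
  have hterm : ∀ t ∈ triples, unifProb (E t) ≤ 2 ^ (2 * N + 1) * (1 / 2) ^ n := by
    rintro ⟨i, S, D⟩ ht
    simp only [triples, fam, mem_product, mem_filter, mem_univ, true_and] at ht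
    exact unifProb_isNullVec_compl_insert_le i ht.1 ht.2
  have hcount : (#triples : ℝ) ≤ n * (n + 1) ^ N * (n + 1) ^ N := by
    have hfam : (#fam : ℝ) ≤ (n + 1) ^ N := by
      exact_mod_cast Fintype.card_fin n ▸ card_filter_card_le_le_pow (Fin n) N
    simp only [triples, card_product, card_univ, Fintype.card_fin, Nat.cast_mul, ← mul_assoc]
    gcongr
  calc _ ≤ ∑ t ∈ triples, unifProb (E t) := unifProb_le_sum _ _ hcover
    _ ≤ ∑ t ∈ triples, 2 ^ (2 * N + 1) * (1 / 2 : ℝ) ^ n := sum_le_sum hterm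
    _ = #triples * 2 ^ (2 * N + 1) * (1 / 2 : ℝ) ^ n := by
        rw [sum_const, nsmul_eq_mul, mul_assoc]
    _ ≤ (n + 1) * (n + 1) ^ N * (n + 1) ^ N * 2 ^ (2 * N + 1) * (1 / 2 : ℝ) ^ n := by
        gcongr
        exact hcount.trans (by gcongr; linarith)
    _ = (2 * n + 2 : ℝ) ^ (2 * N + 1) * (1 / 2) ^ n := by
        rw [show (2 * n + 2 : ℝ) = 2 * (n + 1) by ring, mul_pow]
        ring

end SymmBernoulli

/-- The probability that a random symmetric Bernoulli matrix is nonsingular and imperfect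
(some row is bad, w.r.t. `N = n^{1-ε}`) is `O((2/3)^n)`, with implied constant depending
only on `ε`. -/
theorem nonsingular_imperfect_prob (ε : ℝ) (hε : 0 < ε) :
    ∃ C : ℝ, ∀ n : ℕ,
      unifProb (fun ω : UpIdx n → Bool =>
          (bmat n ω).det ≠ 0 ∧ ∃ i, ¬ GoodRow (bmat n ω) ((n : ℝ) ^ (1 - ε)) i)
        ≤ C * (2 / 3 : ℝ) ^ n := by
  obtain ⟨C, hC⟩ :=
    (tendsto_pow_floor_rpow_mul_pow hε (r := 3 / 4) (by norm_num) (by norm_num)).bddAbove_range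
  refine ⟨C, fun n => ?_⟩
  calc _ ≤ unifProb fun ω : UpIdx n → Bool => ∃ i, ¬ GoodRow (bmat n ω) ((n : ℝ) ^ (1 - ε)) i :=
        unifProb_mono fun ω h => h.2
    _ ≤ (2 * n + 2 : ℝ) ^ (2 * ⌊(n : ℝ) ^ (1 - ε)⌋₊ + 1) * (1 / 2) ^ n :=
        SymmBernoulli.unifProb_exists_not_goodRow_le _
    _ = (2 * n + 2 : ℝ) ^ (2 * ⌊(n : ℝ) ^ (1 - ε)⌋₊ + 1) * (3 / 4) ^ n * (2 / 3) ^ n := by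
        rw [mul_assoc, ← mul_pow]
        norm_num
    _ ≤ C * (2 / 3) ^ n := by
        gcongr
        exact hC ⟨n, rfl⟩
end

section
/- Let H be a linear subspace of ℝ^n of dimension at most d, where d ≤ n. Then H contains at most 2^d vectors all of whose coordinates lie in {0,1}; that is, |H ∩ {0,1}^n| ≤ 2^d. -/
/-!
A vector of `H` is determined by its values on at most `dim H` coordinates: the coordinate
functionals restricted to `H` contain a basis of their span in the dual of `H`, and a vector on
which that basis vanishes is killed by every coordinate. Restricting to those coordinates embeds
the `{0,1}`-vectors of `H` into `{0,1}^(dim H)`.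
-/

open Module

theorem Module.Dual.exists_finset_card_le_finrank_forall_apply_eq_zero {K V ι : Type*} [Field K]
    [AddCommGroup V] [Module K V] [FiniteDimensional K V] (f : ι → Dual K V) :
    ∃ s : Finset ι, s.card ≤ finrank K V ∧ ∀ x : V, (∀ i ∈ s, f i x = 0) → ∀ i, f i x = 0 := by
  obtain ⟨κ, a, ha, hspan, hli⟩ := exists_linearIndependent' K f
  have : Fintype κ := @Fintype.ofFinite κ hli.finite
  refine ⟨Finset.univ.map ⟨a, ha⟩, ?_, fun x hx i => ?_⟩
  · simpa [Subspace.dual_finrank_eq] using hli.fintype_card_le_finrank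
  · have hker : Submodule.span K (Set.range (f ∘ a)) ≤ LinearMap.ker (Dual.eval K V x) := by
      rw [Submodule.span_le]
      rintro _ ⟨j, rfl⟩
      exact hx (a j) (Finset.mem_map_of_mem _ (Finset.mem_univ j))
    exact hker (hspan ▸ Submodule.subset_span (Set.mem_range_self i))

theorem Submodule.exists_finset_card_le_finrank_injOn_restrict {K ι : Type*} [Field K]
    (H : Submodule K (ι → K)) [FiniteDimensional K H] :
    ∃ s : Finset ι, s.card ≤ finrank K H ∧ Set.InjOn s.restrict (H : Set (ι → K)) := by
  obtain ⟨s, hcard, hs⟩ := Dual.exists_finset_card_le_finrank_forall_apply_eq_zero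
    fun i => (LinearMap.proj i).comp H.subtype
  refine ⟨s, hcard, fun v hv w hw hvw => funext fun i => sub_eq_zero.mp ?_⟩
  refine hs ⟨v - w, H.sub_mem hv hw⟩ (fun j hj => sub_eq_zero.mpr ?_) i
  exact congrFun hvw ⟨j, hj⟩

theorem Submodule.ncard_setOf_mem_forall_apply_mem_le {K ι : Type*} [Field K]
    (H : Submodule K (ι → K)) [FiniteDimensional K H] {A : Set K} (hA : A.Finite)
    (hA₀ : A.Nonempty) :
    {v | v ∈ H ∧ ∀ i, v i ∈ A}.ncard ≤ A.ncard ^ finrank K H := by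
  obtain ⟨s, hcard, hs⟩ := H.exists_finset_card_le_finrank_injOn_restrict
  have : Finite A := hA.to_subtype
  let g : {v | v ∈ H ∧ ∀ i, v i ∈ A} → (s → A) := fun v i => ⟨v.1 i, v.2.2 i⟩
  have hg : Function.Injective g := fun v w hvw =>
    Subtype.ext <| hs v.2.1 w.2.1 <| funext fun i => congrArg Subtype.val (congrFun hvw i)
  calc {v | v ∈ H ∧ ∀ i, v i ∈ A}.ncard = Nat.card {v | v ∈ H ∧ ∀ i, v i ∈ A} :=
        (Nat.card_coe_set_eq _).symm
    _ ≤ Nat.card (s → A) := Nat.card_le_card_of_injective g hg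
    _ = A.ncard ^ s.card := by rw [Nat.card_fun, Nat.card_coe_set_eq, Nat.card_eq_finsetCard]
    _ ≤ A.ncard ^ finrank K H := Nat.pow_le_pow_right ((Set.ncard_pos hA).mpr hA₀) hcard

theorem subspace_card_zero_one_vectors_general (n d : ℕ)
    (H : Submodule ℝ (Fin n → ℝ)) (hH : Module.finrank ℝ H ≤ d) :
    Set.ncard {v : Fin n → ℝ | v ∈ H ∧ ∀ i, v i = 0 ∨ v i = 1} ≤ 2 ^ d := by
  have h01 : ({0, 1} : Set ℝ).ncard = 2 := Set.ncard_pair zero_ne_one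
  calc Set.ncard {v : Fin n → ℝ | v ∈ H ∧ ∀ i, v i = 0 ∨ v i = 1}
      ≤ ({0, 1} : Set ℝ).ncard ^ finrank ℝ H :=
        H.ncard_setOf_mem_forall_apply_mem_le (Set.toFinite _) (Set.insert_nonempty 0 {1})
    _ ≤ 2 ^ d := h01 ▸ Nat.pow_le_pow_right two_pos hH

/-- A linear subspace of `ℝ^n` of dimension at most `d ≤ n` contains at most `2^d` vectors
all of whose coordinates lie in `{0,1}`. -/
theorem subspace_card_zero_one_vectors (n d : ℕ) (hdn : d ≤ n)
    (H : Submodule ℝ (Fin n → ℝ)) (hH : Module.finrank ℝ H ≤ d) :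
    Set.ncard {v : Fin n → ℝ | v ∈ H ∧ ∀ i, v i = 0 ∨ v i = 1} ≤ 2 ^ d :=
  subspace_card_zero_one_vectors_general n d H hH
end

section
/- (Erdős–Littlewood–Offord inequality.) Let z_1,…,z_n be i.i.d. random variables taking values 0 and 1 each with probability 1/2. Let a_1,…,a_n be real numbers such that |a_i| ≥ 1 for at least k ≥ 1 values of i. Then there is an absolute constant C such that for every interval I ⊂ ℝ of length 1, P(∑_{i=1}^n a_i z_i ∈ I) ≤ C k^{-1/2}. -/
set_option maxHeartbeats 1000000

open scoped Classical

lemma centralBinom_sqrt_le (m : ℕ) :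
    (Nat.centralBinom m : ℝ) * Real.sqrt (3 * m + 1) ≤ 4 ^ m := by
  induction m with
  | zero => simp [Nat.centralBinom]
  | succ m ih =>
    have key : (Nat.centralBinom (m + 1) : ℝ) * (m + 1) =
        2 * (2 * m + 1) * Nat.centralBinom m := by
      have := Nat.succ_mul_centralBinom_succ m
      exact_mod_cast by push_cast [← this]; ring
    have hs : (2 * (m:ℝ) + 1) * Real.sqrt (3 * (m+1) + 1) ≤
        2 * ((m:ℝ) + 1) * Real.sqrt (3 * m + 1) := by
      have h1 : (2 * (m:ℝ) + 1) * Real.sqrt (3 * (m+1) + 1)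
          = Real.sqrt ((2 * (m:ℝ) + 1)^2 * (3 * (m+1) + 1)) := by
        rw [Real.sqrt_mul (by positivity), Real.sqrt_sq (by positivity)]
      have h2 : 2 * ((m:ℝ) + 1) * Real.sqrt (3 * m + 1)
          = Real.sqrt ((2 * ((m:ℝ) + 1))^2 * (3 * m + 1)) := by
        rw [Real.sqrt_mul (by positivity), Real.sqrt_sq (by positivity)]
      rw [h1, h2]
      apply Real.sqrt_le_sqrt
      nlinarith [sq_nonneg ((m:ℝ))]
    have hpos : (0:ℝ) < (m:ℝ) + 1 := by positivity
    have hc : (0:ℝ) ≤ (Nat.centralBinom m : ℝ) := by positivity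
    -- centralBinom (m+1) * sqrt(3(m+1)+1) * (m+1) ≤ 4^(m+1) * (m+1)
    rw [← mul_le_mul_iff_of_pos_right hpos]
    calc (Nat.centralBinom (m + 1) : ℝ) * Real.sqrt (3 * ↑(m+1) + 1) * ((m:ℝ) + 1)
        = (2 * (2 * m + 1) * Nat.centralBinom m) * Real.sqrt (3 * ((m:ℝ)+1) + 1) := by
          push_cast
          rw [mul_right_comm]
          push_cast [key] at *
          linarith [key]
      _ = 2 * (Nat.centralBinom m : ℝ) * ((2 * (m:ℝ) + 1) * Real.sqrt (3 * ((m:ℝ)+1) + 1)) := by ring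
      _ ≤ 2 * (Nat.centralBinom m : ℝ) * (2 * ((m:ℝ) + 1) * Real.sqrt (3 * m + 1)) := by
          apply mul_le_mul_of_nonneg_left hs (by positivity)
      _ = 4 * ((m:ℝ) + 1) * ((Nat.centralBinom m : ℝ) * Real.sqrt (3 * m + 1)) := by ring
      _ ≤ 4 * ((m:ℝ) + 1) * 4 ^ m := by
          apply mul_le_mul_of_nonneg_left ih (by positivity)
      _ = 4 ^ (m + 1) * ((m:ℝ) + 1) := by ring

lemma choose_half_sqrt_le (k : ℕ) :
    (k.choose (k / 2) : ℝ) * Real.sqrt k ≤ 2 ^ k := by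
  obtain ⟨m, rfl | rfl⟩ := Nat.even_or_odd' k
  · -- k = 2m
    have hd : 2 * m / 2 = m := by omega
    have h1 : (2*m).choose (2*m/2) = Nat.centralBinom m := by
      rw [hd, Nat.centralBinom_eq_two_mul_choose]
    rw [h1]
    have hle : Real.sqrt (2*m : ℕ) ≤ Real.sqrt (3 * m + 1) :=
      Real.sqrt_le_sqrt (by push_cast; linarith [Nat.cast_nonneg (α := ℝ) m])
    calc (Nat.centralBinom m : ℝ) * Real.sqrt (2*m : ℕ)
        ≤ (Nat.centralBinom m : ℝ) * Real.sqrt (3 * m + 1) :=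
          mul_le_mul_of_nonneg_left hle (by positivity)
      _ ≤ 4 ^ m := centralBinom_sqrt_le m
      _ = 2 ^ (2*m) := by rw [pow_mul]; norm_num
  · -- k = 2m+1
    have hd : (2 * m + 1) / 2 = m := by omega
    rw [hd]
    have hch : ((2*m+1).choose m : ℝ) ≤ 2 * Nat.centralBinom m := by
      rcases m with _ | j
      · norm_num [Nat.centralBinom]
      · have : (2*(j+1)+1) = (2*(j+1)) + 1 := rfl
        have h2 : (2*(j+1)+1).choose (j+1) = (2*(j+1)).choose j + (2*(j+1)).choose (j+1) :=
          Nat.choose_succ_succ _ _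
        have hb1 : (2*(j+1)).choose j ≤ Nat.centralBinom (j+1) := Nat.choose_le_centralBinom _ _
        have hb2 : (2*(j+1)).choose (j+1) ≤ Nat.centralBinom (j+1) := Nat.choose_le_centralBinom _ _
        have hb1' : ((2*(j+1)).choose j : ℝ) ≤ (Nat.centralBinom (j+1) : ℝ) := by exact_mod_cast hb1
        have hb2' : ((2*(j+1)).choose (j+1) : ℝ) ≤ (Nat.centralBinom (j+1) : ℝ) := by exact_mod_cast hb2
        push_cast [h2]
        linarith
    have hle : Real.sqrt (2*m+1 : ℕ) ≤ Real.sqrt (3 * m + 1) :=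
      Real.sqrt_le_sqrt (by push_cast; linarith [Nat.cast_nonneg (α := ℝ) m])
    calc ((2*m+1).choose m : ℝ) * Real.sqrt (2*m+1 : ℕ)
        ≤ (2 * Nat.centralBinom m : ℝ) * Real.sqrt (3 * m + 1) := by
          apply mul_le_mul hch hle (Real.sqrt_nonneg _) (by positivity)
      _ = 2 * ((Nat.centralBinom m : ℝ) * Real.sqrt (3 * m + 1)) := by ring
      _ ≤ 2 * 4 ^ m := by linarith [centralBinom_sqrt_le m]
      _ = 2 ^ (2*m+1) := by rw [pow_succ, pow_mul]; norm_num; ring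

lemma antichain_count {ι : Type*} [Fintype ι] (b : ι → ℝ) (hb : ∀ i, 1 ≤ b i) (t : ℝ)
    (𝒜 : Finset (Finset ι)) (h𝒜 : ∀ T ∈ 𝒜, (∑ i ∈ T, b i) ∈ Set.Ico t (t + 1)) :
    𝒜.card ≤ (Fintype.card ι).choose (Fintype.card ι / 2) := by
  apply IsAntichain.sperner
  intro T hT T' hT' hne hsub
  rw [Finset.mem_coe] at hT hT'
  have hss : T ⊆ T' := hsub
  have hone : (1:ℝ) ≤ ∑ i ∈ T' \ T, b i := by
    have hne' : (T' \ T).Nonempty := by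
      rw [Finset.sdiff_nonempty]
      intro h
      exact hne (Finset.Subset.antisymm hss h)
    calc (1:ℝ) ≤ ((T' \ T).card : ℝ) := by
          exact_mod_cast Nat.one_le_iff_ne_zero.2 (Finset.card_ne_zero_of_mem hne'.choose_spec)
      _ = ∑ _i ∈ T' \ T, (1:ℝ) := by simp
      _ ≤ ∑ i ∈ T' \ T, b i := Finset.sum_le_sum (fun i _ => hb i)
  have hsum : ∑ i ∈ T', b i = ∑ i ∈ T, b i + ∑ i ∈ T' \ T, b i := by
    rw [add_comm, Finset.sum_sdiff hss]
  obtain ⟨h1, h2⟩ := h𝒜 T hT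
  obtain ⟨h1', h2'⟩ := h𝒜 T' hT'
  linarith

lemma count_le (n : ℕ) (b : Fin n → ℝ) (t : ℝ)
    (s : Finset (Fin n)) (hs : ∀ i ∈ s, 1 ≤ b i) :
    (Finset.univ.filter (fun ω : Fin n → Bool =>
        (∑ i, b i * (if ω i then (1:ℝ) else 0)) ∈ Set.Ico t (t + 1))).card
      ≤ (s.card.choose (s.card / 2)) * 2 ^ (n - s.card) := by
  set E := Finset.univ.filter (fun ω : Fin n → Bool =>
        (∑ i, b i * (if ω i then (1:ℝ) else 0)) ∈ Set.Ico t (t + 1)) with hE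
  set f : (Fin n → Bool) → ({i : Fin n // i ∉ s} → Bool) := fun ω i => ω i.1 with hf
  have hfiber : ∀ g ∈ E.image f, (E.filter fun ω => f ω = g).card ≤
      s.card.choose (s.card / 2) := by
    intro g _
    set c : ℝ := ∑ i : {i : Fin n // i ∉ s}, b i.1 * (if g i then (1:ℝ) else 0) with hc
    set Φ : (Fin n → Bool) → Finset {i : Fin n // i ∈ s} :=
      fun ω => Finset.univ.filter (fun i : {i : Fin n // i ∈ s} => ω i.1) with hΦ
    have hsplit : ∀ ω : Fin n → Bool, f ω = g →
        (∑ i, b i * (if ω i then (1:ℝ) else 0)) = (∑ i ∈ Φ ω, b i.1) + c := by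
      intro ω hg
      have h1 : (∑ i, b i * (if ω i then (1:ℝ) else 0)) =
          (∑ i ∈ Finset.univ.filter (fun i => i ∈ s), b i * (if ω i then (1:ℝ) else 0)) +
          (∑ i ∈ Finset.univ.filter (fun i => ¬ i ∈ s), b i * (if ω i then (1:ℝ) else 0)) :=
        (Finset.sum_filter_add_sum_filter_not _ _ _).symm
      have h2 : (∑ i ∈ Finset.univ.filter (fun i => i ∈ s), b i * (if ω i then (1:ℝ) else 0))
          = ∑ i ∈ Φ ω, b i.1 := by
        rw [Finset.sum_subtype (Finset.univ.filter (fun i => i ∈ s))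
          (p := fun i => i ∈ s) (by simp) (fun i => b i * (if ω i then (1:ℝ) else 0))]
        rw [hΦ, Finset.sum_filter]
        apply Finset.sum_congr rfl
        intro i _
        by_cases h : ω i.1 <;> simp [h]
      have h3 : (∑ i ∈ Finset.univ.filter (fun i => ¬ i ∈ s), b i * (if ω i then (1:ℝ) else 0))
          = c := by
        rw [Finset.sum_subtype (Finset.univ.filter (fun i => ¬ i ∈ s))
          (p := fun i => ¬ i ∈ s) (by simp) (fun i => b i * (if ω i then (1:ℝ) else 0))]
        rw [hc]
        apply Finset.sum_congr rfl
        intro i _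
        rw [← hg]
      rw [h1, h2, h3]
    have hinj : Set.InjOn Φ (E.filter (fun ω => f ω = g)) := by
      intro ω hω ω' hω' hΦeq
      rw [Finset.mem_coe, Finset.mem_filter] at hω hω'
      funext i
      by_cases h : i ∈ s
      · have := Finset.ext_iff.1 hΦeq ⟨i, h⟩
        simp only [hΦ, Finset.mem_filter, Finset.mem_univ, true_and] at this
        cases hωi : ω i <;> cases hωi' : ω' i <;> simp_all
      · have h1 := congrFun hω.2 ⟨i, h⟩
        have h2 := congrFun hω'.2 ⟨i, h⟩
        simp only [hf] at h1 h2
        rw [h1, h2]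
    have hcardim : ((E.filter (fun ω => f ω = g)).image Φ).card
        = (E.filter (fun ω => f ω = g)).card :=
      Finset.card_image_of_injOn hinj
    rw [← hcardim]
    have hmem : ∀ T ∈ (E.filter (fun ω => f ω = g)).image Φ,
        (∑ i ∈ T, b i.1) ∈ Set.Ico (t - c) (t - c + 1) := by
      intro T hT
      rw [Finset.mem_image] at hT
      obtain ⟨ω, hω, rfl⟩ := hT
      rw [Finset.mem_filter] at hω
      obtain ⟨hωE, hωg⟩ := hω
      rw [hE, Finset.mem_filter] at hωE
      have hmem := hωE.2
      rw [hsplit ω hωg] at hmem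
      obtain ⟨hl, hr⟩ := hmem
      constructor
      · linarith
      · linarith
    calc ((E.filter (fun ω => f ω = g)).image Φ).card
        ≤ (Fintype.card {i : Fin n // i ∈ s}).choose
            (Fintype.card {i : Fin n // i ∈ s} / 2) :=
          antichain_count _ (fun i => hs i.1 i.2) _ _ hmem
      _ = s.card.choose (s.card / 2) := by rw [Fintype.card_coe]
  calc E.card ≤ s.card.choose (s.card / 2) * (E.image f).card :=
        Finset.card_le_mul_card_image E _ hfiber
    _ ≤ s.card.choose (s.card / 2) * 2 ^ (n - s.card) := by
        apply Nat.mul_le_mul_left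
        calc (E.image f).card ≤ Fintype.card ({i : Fin n // i ∉ s} → Bool) :=
              Finset.card_le_univ _
          _ = 2 ^ (n - s.card) := by
              rw [Fintype.card_fun, Fintype.card_bool]
              congr 1
              rw [Fintype.card_subtype_compl, Fintype.card_coe, Fintype.card_fin]

lemma flip_count (n : ℕ) (a : Fin n → ℝ) (t : ℝ) :
    (Finset.univ.filter (fun ω : Fin n → Bool =>
        (∑ i, a i * (if ω i then (1:ℝ) else 0)) ∈ Set.Ico t (t + 1))).card
    = (Finset.univ.filter (fun ω : Fin n → Bool =>
        (∑ i, |a i| * (if ω i then (1:ℝ) else 0)) ∈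
          Set.Ico (t + ∑ i, (if a i < 0 then -a i else 0))
            ((t + ∑ i, (if a i < 0 then -a i else 0)) + 1))).card := by
  set c : ℝ := ∑ i, (if a i < 0 then -a i else 0) with hc
  set F : (Fin n → Bool) → (Fin n → Bool) := fun ω i => if a i < 0 then ! ω i else ω i with hF
  have hFF : ∀ ω, F (F ω) = ω := by
    intro ω; funext i; by_cases h : a i < 0 <;> simp [hF, h]
  have hkey : ∀ ω : Fin n → Bool,
      (∑ i, |a i| * (if F ω i then (1:ℝ) else 0)) =
        (∑ i, a i * (if ω i then (1:ℝ) else 0)) + c := by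
    intro ω
    rw [hc, ← Finset.sum_add_distrib]
    apply Finset.sum_congr rfl
    intro i _
    by_cases h : a i < 0
    · have habs : |a i| = -a i := abs_of_neg h
      by_cases hω : ω i <;> simp [hF, h, hω, habs] <;> ring
    · have habs : |a i| = a i := abs_of_nonneg (not_lt.1 h)
      by_cases hω : ω i <;> simp [hF, h, hω, habs]
  have himg : Finset.univ.filter (fun ω : Fin n → Bool =>
        (∑ i, |a i| * (if ω i then (1:ℝ) else 0)) ∈ Set.Ico (t + c) ((t + c) + 1))
      = (Finset.univ.filter (fun ω : Fin n → Bool =>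
        (∑ i, a i * (if ω i then (1:ℝ) else 0)) ∈ Set.Ico t (t + 1))).image F := by
    ext ω
    simp only [Finset.mem_filter, Finset.mem_univ, true_and, Finset.mem_image]
    constructor
    · intro hω
      refine ⟨F ω, ?_, hFF ω⟩
      have := hkey (F ω)
      rw [hFF ω] at this
      obtain ⟨h1, h2⟩ := hω
      rw [this] at h1 h2
      exact ⟨by linarith, by linarith⟩
    · rintro ⟨ω', hω', rfl⟩
      have := hkey ω'
      obtain ⟨h1, h2⟩ := hω'
      rw [this]
      exact ⟨by linarith, by linarith⟩
  rw [himg, Finset.card_image_of_injective _ (Function.LeftInverse.injective hFF)]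

/-- Erdős–Littlewood–Offord inequality: if `z_1, …, z_n` are i.i.d. Bernoulli(1/2) random
variables and at least `k ≥ 1` of the real coefficients `a_i` satisfy `|a_i| ≥ 1`, then for
any interval `I = [t, t+1]` of length 1, `P(∑ a_i z_i ∈ I) ≤ C k^{-1/2}` for an absolute
constant `C`. -/
theorem linear_littlewood_offord :
    ∃ C : ℝ, ∀ (n k : ℕ) (a : Fin n → ℝ), 1 ≤ k →
      k ≤ (Finset.univ.filter fun i => 1 ≤ |a i|).card →
      ∀ t : ℝ,
        unifProb (fun ω : Fin n → Bool =>
            (∑ i, a i * (if ω i then (1 : ℝ) else 0)) ∈ Set.Icc t (t + 1))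
          ≤ C * (k : ℝ) ^ (-(1 / 2 : ℝ)) := by
  refine ⟨2, ?_⟩
  intro n k a hk hcard t
  set s : Finset (Fin n) := Finset.univ.filter (fun i => 1 ≤ |a i|) with hsdef
  set m : ℕ := s.card with hm
  have hs : ∀ i ∈ s, 1 ≤ |a i| := by
    intro i hi
    rw [hsdef, Finset.mem_filter] at hi
    exact hi.2
  have hmn : m ≤ n := by
    calc m ≤ Finset.univ.card := Finset.card_le_card (Finset.filter_subset _ _)
      _ = n := by simp
  have hkm : k ≤ m := hcard
  -- count for each of the two half-open intervals
  have hcount : ∀ u : ℝ,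
      (Finset.univ.filter (fun ω : Fin n → Bool =>
        (∑ i, a i * (if ω i then (1:ℝ) else 0)) ∈ Set.Ico u (u + 1))).card
      ≤ m.choose (m / 2) * 2 ^ (n - m) := by
    intro u
    rw [flip_count n a u]
    exact count_le n (fun i => |a i|) _ s hs
  -- the union bound over the two half-open intervals
  have hsplit : (Finset.univ.filter (fun ω : Fin n → Bool =>
        (∑ i, a i * (if ω i then (1:ℝ) else 0)) ∈ Set.Icc t (t + 1))).card
      ≤ 2 * (m.choose (m / 2) * 2 ^ (n - m)) := by
    have hsub : (Finset.univ.filter (fun ω : Fin n → Bool =>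
          (∑ i, a i * (if ω i then (1:ℝ) else 0)) ∈ Set.Icc t (t + 1)))
        ⊆ (Finset.univ.filter (fun ω : Fin n → Bool =>
          (∑ i, a i * (if ω i then (1:ℝ) else 0)) ∈ Set.Ico t (t + 1)))
          ∪ (Finset.univ.filter (fun ω : Fin n → Bool =>
          (∑ i, a i * (if ω i then (1:ℝ) else 0)) ∈ Set.Ico (t+1) ((t+1) + 1))) := by
      intro ω hω
      rw [Finset.mem_filter] at hω
      obtain ⟨-, h1, h2⟩ := hω
      rw [Finset.mem_union, Finset.mem_filter, Finset.mem_filter]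
      rcases lt_or_ge (∑ i, a i * (if ω i then (1:ℝ) else 0)) (t + 1) with h | h
      · exact Or.inl ⟨Finset.mem_univ _, h1, h⟩
      · exact Or.inr ⟨Finset.mem_univ _, h, by linarith⟩
    calc (Finset.univ.filter (fun ω : Fin n → Bool =>
          (∑ i, a i * (if ω i then (1:ℝ) else 0)) ∈ Set.Icc t (t + 1))).card
        ≤ _ := Finset.card_le_card hsub
      _ ≤ _ := Finset.card_union_le _ _
      _ ≤ 2 * (m.choose (m / 2) * 2 ^ (n - m)) := by
          have h1 := hcount t
          have h2 := hcount (t + 1)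
          linarith [Nat.add_le_add h1 h2]
  -- now the real arithmetic
  have hsqrtk : (0:ℝ) < Real.sqrt k := Real.sqrt_pos.2 (by exact_mod_cast hk)
  have hsqrtm : Real.sqrt k ≤ Real.sqrt m := Real.sqrt_le_sqrt (by exact_mod_cast hkm)
  have hch : (m.choose (m / 2) : ℝ) ≤ 2 ^ m / Real.sqrt k := by
    rw [le_div_iff₀ hsqrtk]
    calc (m.choose (m / 2) : ℝ) * Real.sqrt k
        ≤ (m.choose (m / 2) : ℝ) * Real.sqrt m :=
          mul_le_mul_of_nonneg_left hsqrtm (by positivity)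
      _ ≤ 2 ^ m := choose_half_sqrt_le m
  have hcast : ((Finset.univ.filter (fun ω : Fin n → Bool =>
      (∑ i, a i * (if ω i then (1:ℝ) else 0)) ∈ Set.Icc t (t + 1))).card : ℝ)
      ≤ 2 * (2 ^ m / Real.sqrt k * 2 ^ (n - m)) := by
    calc ((Finset.univ.filter (fun ω : Fin n → Bool =>
        (∑ i, a i * (if ω i then (1:ℝ) else 0)) ∈ Set.Icc t (t + 1))).card : ℝ)
        ≤ (2 * (m.choose (m / 2) * 2 ^ (n - m)) : ℕ) := by exact_mod_cast hsplit
      _ = 2 * ((m.choose (m / 2) : ℝ) * 2 ^ (n - m)) := by push_cast; ring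
      _ ≤ 2 * (2 ^ m / Real.sqrt k * 2 ^ (n - m)) := by
          have h2 : (0:ℝ) ≤ (2:ℝ) ^ (n - m) := by positivity
          have := mul_le_mul_of_nonneg_right hch h2
          linarith
  have hpow : (2:ℝ) ^ m * 2 ^ (n - m) = 2 ^ n := by
    rw [← pow_add, Nat.add_sub_cancel' hmn]
  have hrpow : ((k:ℝ)) ^ (-(1 / 2 : ℝ)) = (Real.sqrt k)⁻¹ := by
    rw [Real.rpow_neg (by positivity), Real.sqrt_eq_rpow]
  rw [unifProb, hrpow]
  rw [Finset.filter_congr_decidable]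
  have hcardfun : (Fintype.card (Fin n → Bool) : ℝ) = 2 ^ n := by
    rw [Fintype.card_fun, Fintype.card_bool, Fintype.card_fin]
    push_cast
    ring
  rw [hcardfun]
  rw [div_le_iff₀ (by positivity)]
  refine le_trans hcast (le_of_eq ?_)
  rw [← hpow]
  field_simp
end

section
/- (Decoupling lemma.) Let X and Y be independent random variables taking values in measurable spaces, let X' be an independent copy of X and Y' an independent copy of Y, with X, X', Y, Y' jointly independent. Let E(·,·) be a measurable event depending on the pair of values. Then P(E(X,Y)) ≤ P(E(X,Y) ∧ E(X',Y) ∧ E(X,Y') ∧ E(X',Y'))^{1/4}; equivalently, P(E(X,Y))^4 ≤ P(all four events E(X,Y), E(X',Y), E(X,Y'), E(X',Y') hold simultaneously). -/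
open MeasureTheory ProbabilityTheory
open scoped ENNReal

/-- Cauchy–Schwarz / Jensen for `lintegral` over a probability measure. -/
lemma sq_lintegral_le_lintegral_sq {α : Type*} [MeasurableSpace α] (ν : Measure α)
    [IsProbabilityMeasure ν] {f : α → ℝ≥0∞} (hf : AEMeasurable f ν) :
    (∫⁻ a, f a ∂ν) ^ 2 ≤ ∫⁻ a, f a ^ 2 ∂ν := by
  have hpq : (2 : ℝ).HolderConjugate 2 := by constructor <;> norm_num
  have h := ENNReal.lintegral_mul_le_Lp_mul_Lq ν hpq hf
    (aemeasurable_const : AEMeasurable (fun _ : α => (1:ℝ≥0∞)) ν)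
  simp only [Pi.mul_apply, mul_one, ENNReal.one_rpow, lintegral_const, measure_univ,
    ENNReal.one_rpow] at h
  calc (∫⁻ a, f a ∂ν) ^ 2 ≤ ((∫⁻ a, f a ^ (2:ℝ) ∂ν) ^ ((1:ℝ)/2)) ^ 2 :=
        pow_le_pow_left' h 2
    _ = ∫⁻ a, f a ^ 2 ∂ν := by
        rw [← ENNReal.rpow_natCast _ 2, ← ENNReal.rpow_mul]
        norm_num

/-- Decoupling lemma: let `X, Y` be random variables with values in measurable spaces `S, T`,
let `X'` be an independent copy of `X` and `Y'` an independent copy of `Y`, with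
`X, X', Y, Y'` jointly independent (equivalently: `X ⊥ X'`, `Y ⊥ Y'`, and the pair
`(X, X')` is independent of the pair `(Y, Y')`).  Then for any measurable event
`E ⊆ S × T`,
`P(E(X,Y)) ≤ P(E(X,Y) ∧ E(X',Y) ∧ E(X,Y') ∧ E(X',Y'))^{1/4}`. -/
theorem decoupling_lemma {Ω S T : Type*} [MeasurableSpace Ω] [MeasurableSpace S]
    [MeasurableSpace T] (μ : Measure Ω) [IsProbabilityMeasure μ]
    (X X' : Ω → S) (Y Y' : Ω → T)
    (hX : Measurable X) (hX' : Measurable X') (hY : Measurable Y) (hY' : Measurable Y')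
    (hXcopy : IdentDistrib X X' μ μ) (hYcopy : IdentDistrib Y Y' μ μ)
    (hXX' : IndepFun X X' μ) (hYY' : IndepFun Y Y' μ)
    (hpairs : IndepFun (fun ω => (X ω, X' ω)) (fun ω => (Y ω, Y' ω)) μ)
    (E : Set (S × T)) (hE : MeasurableSet E) :
    μ {ω | (X ω, Y ω) ∈ E} ≤
      (μ {ω | (X ω, Y ω) ∈ E ∧ (X' ω, Y ω) ∈ E ∧ (X ω, Y' ω) ∈ E ∧ (X' ω, Y' ω) ∈ E})
        ^ ((1 : ℝ) / 4) := by
  classical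
  set νX : Measure S := μ.map X with hνX
  set νY : Measure T := μ.map Y with hνY
  have : IsProbabilityMeasure νX := Measure.isProbabilityMeasure_map hX.aemeasurable
  have : IsProbabilityMeasure νY := Measure.isProbabilityMeasure_map hY.aemeasurable
  -- indicator function
  set f : S → T → ℝ≥0∞ := fun x y => if (x, y) ∈ E then 1 else 0 with hf
  have hfm : Measurable (fun p : S × T => f p.1 p.2) := by
    have : (fun p : S × T => f p.1 p.2) = fun p => if p ∈ E then 1 else 0 := by
      funext p; simp [hf]
    rw [this]
    exact Measurable.ite hE measurable_const measurable_const
  have hfx : ∀ x, Measurable (f x) := fun x =>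
    hfm.comp (measurable_prodMk_left)
  have hfy : ∀ y, Measurable (fun x => f x y) := fun y =>
    hfm.comp (measurable_prodMk_right)
  -- laws
  have hmapXX' : μ.map (fun ω => (X ω, X' ω)) = νX.prod νX := by
    rw [(indepFun_iff_map_prod_eq_prod_map_map hX.aemeasurable hX'.aemeasurable).mp hXX',
      ← hXcopy.map_eq]
  have hmapYY' : μ.map (fun ω => (Y ω, Y' ω)) = νY.prod νY := by
    rw [(indepFun_iff_map_prod_eq_prod_map_map hY.aemeasurable hY'.aemeasurable).mp hYY',
      ← hYcopy.map_eq]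
  have hXYindep : IndepFun X Y μ := hpairs.comp measurable_fst measurable_fst
  have hmapXY : μ.map (fun ω => (X ω, Y ω)) = νX.prod νY :=
    (indepFun_iff_map_prod_eq_prod_map_map hX.aemeasurable hY.aemeasurable).mp hXYindep
  set Z : Ω → (S × S) × (T × T) := fun ω => ((X ω, X' ω), (Y ω, Y' ω)) with hZ
  have hZm : Measurable Z := ((hX.prodMk hX').prodMk (hY.prodMk hY'))
  have hmapZ : μ.map Z = (νX.prod νX).prod (νY.prod νY) := by
    rw [(indepFun_iff_map_prod_eq_prod_map_map (hX.prodMk hX').aemeasurable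
      (hY.prodMk hY').aemeasurable).mp hpairs, hmapXX', hmapYY']
  -- quadruple event
  set E₄ : Set ((S × S) × (T × T)) := {p | (p.1.1, p.2.1) ∈ E ∧ (p.1.2, p.2.1) ∈ E ∧
    (p.1.1, p.2.2) ∈ E ∧ (p.1.2, p.2.2) ∈ E} with hE₄def
  have h1m : Measurable (fun p : (S × S) × (T × T) => (p.1.1, p.2.1)) :=
    (measurable_fst.fst).prodMk (measurable_snd.fst)
  have h2m : Measurable (fun p : (S × S) × (T × T) => (p.1.2, p.2.1)) :=
    (measurable_fst.snd).prodMk (measurable_snd.fst)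
  have h3m : Measurable (fun p : (S × S) × (T × T) => (p.1.1, p.2.2)) :=
    (measurable_fst.fst).prodMk (measurable_snd.snd)
  have h4m : Measurable (fun p : (S × S) × (T × T) => (p.1.2, p.2.2)) :=
    (measurable_fst.snd).prodMk (measurable_snd.snd)
  have hE₄ : MeasurableSet E₄ :=
    ((h1m hE).inter ((h2m hE).inter ((h3m hE).inter (h4m hE))))
  set G : (S × S) × (T × T) → ℝ≥0∞ := fun p =>
    (f p.1.1 p.2.1 * f p.1.2 p.2.1) * (f p.1.1 p.2.2 * f p.1.2 p.2.2) with hGdef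
  have hGm : Measurable G :=
    ((hfm.comp h1m).mul (hfm.comp h2m)).mul ((hfm.comp h3m).mul (hfm.comp h4m))
  have hGind : ∀ p, E₄.indicator (1 : ((S × S) × (T × T)) → ℝ≥0∞) p = G p := by
    intro p
    by_cases h1 : (p.1.1, p.2.1) ∈ E <;> by_cases h2 : (p.1.2, p.2.1) ∈ E <;>
      by_cases h3 : (p.1.1, p.2.2) ∈ E <;> by_cases h4 : (p.1.2, p.2.2) ∈ E <;>
      simp [hE₄def, hGdef, hf, Set.indicator_apply, h1, h2, h3, h4]
  -- P as a double integral
  set P : ℝ≥0∞ := μ {ω | (X ω, Y ω) ∈ E} with hP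
  have hPeq : P = ∫⁻ x, ∫⁻ y, f x y ∂νY ∂νX := by
    have h1 : P = (νX.prod νY) E := by
      rw [hP, ← hmapXY, Measure.map_apply (hX.prodMk hY) hE]
      rfl
    rw [h1, ← lintegral_indicator_one hE, lintegral_prod _
      ((measurable_one.indicator hE).aemeasurable)]
    refine lintegral_congr fun x => lintegral_congr fun y => ?_
    by_cases hxy : (x, y) ∈ E <;> simp [hf, Set.indicator_apply, hxy]
  -- Q as a quadruple integral
  set Q : ℝ≥0∞ :=
    μ {ω | (X ω, Y ω) ∈ E ∧ (X' ω, Y ω) ∈ E ∧ (X ω, Y' ω) ∈ E ∧ (X' ω, Y' ω) ∈ E} with hQ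
  have hQeq : Q = ∫⁻ x, ∫⁻ x', ∫⁻ y, ∫⁻ y',
      (f x y * f x' y) * (f x y' * f x' y') ∂νY ∂νY ∂νX ∂νX := by
    have h1 : Q = ((νX.prod νX).prod (νY.prod νY)) E₄ := by
      rw [hQ, ← hmapZ, Measure.map_apply hZm hE₄]
      rfl
    rw [h1, ← lintegral_indicator_one hE₄]
    have h2 : ∫⁻ p, E₄.indicator (1 : ((S × S) × (T × T)) → ℝ≥0∞) p ∂((νX.prod νX).prod (νY.prod νY))
        = ∫⁻ p, G p ∂((νX.prod νX).prod (νY.prod νY)) :=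
      lintegral_congr hGind
    rw [h2, lintegral_prod _ hGm.aemeasurable]
    have h3 : ∀ a : S × S, ∫⁻ b, G (a, b) ∂(νY.prod νY) =
        ∫⁻ y, ∫⁻ y', (f a.1 y * f a.2 y) * (f a.1 y' * f a.2 y') ∂νY ∂νY := by
      intro a
      have hGa : Measurable fun b : T × T => G (a, b) := hGm.comp measurable_prodMk_left
      rw [lintegral_prod _ hGa.aemeasurable]
    have h4 : (fun a : S × S => ∫⁻ b, G (a, b) ∂(νY.prod νY)) =
        fun a : S × S => ∫⁻ y, ∫⁻ y', (f a.1 y * f a.2 y) * (f a.1 y' * f a.2 y') ∂νY ∂νY :=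
      funext h3
    rw [show (∫⁻ a, ∫⁻ b, G (a, b) ∂(νY.prod νY) ∂(νX.prod νX)) =
        ∫⁻ a, (∫⁻ y, ∫⁻ y', (f a.1 y * f a.2 y) * (f a.1 y' * f a.2 y') ∂νY ∂νY)
          ∂(νX.prod νX) from lintegral_congr h3]
    have hm : Measurable (fun a : S × S =>
        ∫⁻ y, ∫⁻ y', (f a.1 y * f a.2 y) * (f a.1 y' * f a.2 y') ∂νY ∂νY) := by
      apply Measurable.lintegral_prod_right'
        (f := fun q : (S × S) × T => ∫⁻ y', (f q.1.1 q.2 * f q.1.2 q.2) *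
          (f q.1.1 y' * f q.1.2 y') ∂νY)
      apply Measurable.lintegral_prod_right'
        (f := fun r : ((S × S) × T) × T => (f r.1.1.1 r.1.2 * f r.1.1.2 r.1.2) *
          (f r.1.1.1 r.2 * f r.1.1.2 r.2))
      exact ((hfm.comp ((measurable_fst.fst.fst).prodMk measurable_fst.snd)).mul
        (hfm.comp ((measurable_fst.fst.snd).prodMk measurable_fst.snd))).mul
        ((hfm.comp ((measurable_fst.fst.fst).prodMk measurable_snd)).mul
        (hfm.comp ((measurable_fst.fst.snd).prodMk measurable_snd)))
    rw [lintegral_prod _ hm.aemeasurable]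
  -- inner integrals factor
  set g : S → S → ℝ≥0∞ := fun x x' => ∫⁻ y, f x y * f x' y ∂νY with hg
  have hgm : Measurable (fun a : S × S => g a.1 a.2) := by
    apply Measurable.lintegral_prod_right' (f := fun q : (S × S) × T => f q.1.1 q.2 * f q.1.2 q.2)
    exact (hfm.comp ((measurable_fst.fst).prodMk measurable_snd)).mul
      (hfm.comp ((measurable_fst.snd).prodMk measurable_snd))
  have hQfactor : Q = ∫⁻ x, ∫⁻ x', (g x x') ^ 2 ∂νX ∂νX := by
    rw [hQeq]
    refine lintegral_congr fun x => lintegral_congr fun x' => ?_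
    have inner : ∀ y, ∫⁻ y', (f x y * f x' y) * (f x y' * f x' y') ∂νY
        = (f x y * f x' y) * g x x' := fun y =>
      lintegral_const_mul _ ((hfx x).mul (hfx x'))
    rw [lintegral_congr inner, lintegral_mul_const (f := fun y => f x y * f x' y) _ ((hfx x).mul (hfx x')), sq]
  -- first Cauchy-Schwarz (over νX.prod νX)
  have step1 : (∫⁻ x, ∫⁻ x', g x x' ∂νX ∂νX) ^ 2 ≤ Q := by
    rw [hQfactor, ← lintegral_prod _ hgm.aemeasurable,
      ← lintegral_prod _ ((hgm.pow_const 2).aemeasurable)]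
    exact sq_lintegral_le_lintegral_sq _ hgm.aemeasurable
  -- rearrange the double integral of g
  set hfun : T → ℝ≥0∞ := fun y => ∫⁻ x, f x y ∂νX with hhfun
  have hhm : Measurable hfun := by
    apply Measurable.lintegral_prod_right' (f := fun q : T × S => f q.2 q.1)
    exact hfm.comp (measurable_snd.prodMk measurable_fst)
  have step2 : ∫⁻ x, ∫⁻ x', g x x' ∂νX ∂νX = ∫⁻ y, (hfun y) ^ 2 ∂νY := by
    have swap1 : ∀ x, ∫⁻ x', g x x' ∂νX = ∫⁻ y, f x y * hfun y ∂νY := by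
      intro x
      rw [hg]
      rw [lintegral_lintegral_swap]
      · refine lintegral_congr fun y => ?_
        rw [lintegral_const_mul _ (hfy y)]
      · exact ((hfm.comp ((measurable_const.prodMk measurable_snd :
          Measurable fun q : S × T => (x, q.2)))).mul
          (hfm.comp (measurable_fst.prodMk measurable_snd))).aemeasurable
    rw [lintegral_congr swap1, lintegral_lintegral_swap]
    · refine lintegral_congr fun y => ?_
      rw [lintegral_mul_const _ (hfy y), sq]
    · exact ((hfm.comp (measurable_fst.prodMk measurable_snd)).mul
        (hhm.comp measurable_snd)).aemeasurable
  -- second Cauchy-Schwarz (over νY)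
  have step3 : (∫⁻ y, hfun y ∂νY) ^ 2 ≤ ∫⁻ y, (hfun y) ^ 2 ∂νY :=
    sq_lintegral_le_lintegral_sq _ hhm.aemeasurable
  have hPy : P = ∫⁻ y, hfun y ∂νY := by
    rw [hPeq, lintegral_lintegral_swap hfm.aemeasurable]
  -- combine : P ^ 4 ≤ Q
  have key : P ^ 4 ≤ Q := by
    calc P ^ 4 = (P ^ 2) ^ 2 := by ring
      _ ≤ (∫⁻ y, (hfun y) ^ 2 ∂νY) ^ 2 := by
          apply pow_le_pow_left' _ 2
          rw [hPy]; exact step3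
      _ = (∫⁻ x, ∫⁻ x', g x x' ∂νX ∂νX) ^ 2 := by rw [step2]
      _ ≤ Q := step1
  -- conclude
  calc P = (P ^ 4) ^ ((1:ℝ)/4) := by
        rw [← ENNReal.rpow_natCast P 4, ← ENNReal.rpow_mul]
        norm_num
    _ ≤ Q ^ ((1:ℝ)/4) := ENNReal.rpow_le_rpow key (by norm_num)
end

section
/- Let G be a bipartite graph with vertex parts A and B of sizes n and m respectively, and suppose G has at least c·n·m edges for some 0 ≤ c ≤ 1. Then the number of quadruples (u, u', v, v') with u, u' ∈ A and v, v' ∈ B (repetitions allowed) such that all four pairs uv, uv', u'v, u'v' are edges of G is at least c^4 · n² · m²; i.e., G contains at least c^4 n² m² copies of the four-cycle C_4, counting degenerate four-cycles. -/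
/-!
Write `N(u)` for the neighbourhood of `u ∈ A`. A four-cycle is a pair `(u, u')` together with
an ordered pair of common neighbours, so their number is `∑_{u,u'} |N(u) ∩ N(u')|²`, while
`∑_{u,u'} |N(u) ∩ N(u')| = ∑_v deg(v)²`. Cauchy–Schwarz over `A × A` and then over `B` gives
`|E|⁴ ≤ m² (∑_v deg(v)²)² ≤ n² m² · #four-cycles`.
-/

open scoped Classical
open Finset

namespace BipartiteGraph

variable {A B : Type*} [Fintype A] [Fintype B] (E : Finset (A × B))

noncomputable def rightNbrs (u : A) : Finset B := {v | (u, v) ∈ E}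

noncomputable def leftNbrs (v : B) : Finset A := {u | (u, v) ∈ E}

noncomputable def fourCycles : Finset ((A × A) × (B × B)) :=
  univ.filter fun q : (A × A) × (B × B) =>
    (q.1.1, q.2.1) ∈ E ∧ (q.1.1, q.2.2) ∈ E ∧ (q.1.2, q.2.1) ∈ E ∧ (q.1.2, q.2.2) ∈ E

theorem card_fourCycles :
    #(fourCycles E) = ∑ p : A × A, #(rightNbrs E p.1 ∩ rightNbrs E p.2) ^ 2 := by
  rw [fourCycles, card_filter, Fintype.sum_prod_type]
  refine sum_congr rfl fun p _ => ?_
  rw [sq, ← card_product, ← card_filter]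
  congr 1
  ext w
  simp only [rightNbrs, mem_filter, mem_univ, true_and, mem_product, mem_inter]
  tauto

theorem sum_card_inter_rightNbrs :
    ∑ p : A × A, #(rightNbrs E p.1 ∩ rightNbrs E p.2) = ∑ v, #(leftNbrs E v) ^ 2 := by
  simp only [← filter_and, rightNbrs, card_filter]
  rw [sum_comm]
  refine sum_congr rfl fun v _ => ?_
  rw [sq, ← card_product, ← card_filter]
  congr 1
  ext p
  simp only [leftNbrs, mem_filter, mem_univ, true_and, mem_product]

theorem sum_card_leftNbrs : ∑ v, #(leftNbrs E v) = #E := by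
  simp only [leftNbrs, card_filter]
  rw [sum_comm, ← Fintype.sum_prod_type', ← card_filter, filter_univ_mem]

theorem card_pow_four_le_mul_card_fourCycles :
    #E ^ 4 ≤ (Fintype.card A * Fintype.card B) ^ 2 * #(fourCycles E) := by
  have h_deg : #E ^ 2 ≤ Fintype.card B * ∑ v, #(leftNbrs E v) ^ 2 := by
    rw [← sum_card_leftNbrs]
    exact sq_sum_le_card_mul_sum_sq
  have h_codeg : (∑ v, #(leftNbrs E v) ^ 2) ^ 2 ≤ Fintype.card A ^ 2 * #(fourCycles E) := by
    rw [← sum_card_inter_rightNbrs, card_fourCycles, sq (Fintype.card A), ← Fintype.card_prod]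
    exact sq_sum_le_card_mul_sum_sq
  calc #E ^ 4 = (#E ^ 2) ^ 2 := by ring
    _ ≤ (Fintype.card B * ∑ v, #(leftNbrs E v) ^ 2) ^ 2 := by gcongr
    _ ≤ Fintype.card B ^ 2 * (Fintype.card A ^ 2 * #(fourCycles E)) := by
      rw [mul_pow]; gcongr
    _ = (Fintype.card A * Fintype.card B) ^ 2 * #(fourCycles E) := by ring

end BipartiteGraph

open BipartiteGraph in
theorem bipartite_four_cycles_general {A B : Type*} [Fintype A] [Fintype B]
    (E : Finset (A × B)) (c : ℝ) (hc0 : 0 ≤ c)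
    (hE : c * (Fintype.card A : ℝ) * (Fintype.card B : ℝ) ≤ (E.card : ℝ)) :
    c ^ 4 * (Fintype.card A : ℝ) ^ 2 * (Fintype.card B : ℝ) ^ 2 ≤
      ((Finset.univ.filter fun q : (A × A) × (B × B) =>
          (q.1.1, q.2.1) ∈ E ∧ (q.1.1, q.2.2) ∈ E ∧
          (q.1.2, q.2.1) ∈ E ∧ (q.1.2, q.2.2) ∈ E).card : ℝ) := by
  change _ ≤ (#(fourCycles E) : ℝ)
  have h_four : (c * Fintype.card A * Fintype.card B) ^ 4 ≤
      ((Fintype.card A * Fintype.card B) ^ 2 * #(fourCycles E) : ℕ) :=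
    calc (c * Fintype.card A * Fintype.card B) ^ 4 ≤ (#E : ℝ) ^ 4 := by gcongr
      _ ≤ _ := by exact_mod_cast card_pow_four_le_mul_card_fourCycles E
  push_cast at h_four
  set n : ℝ := (Fintype.card A : ℝ)
  set m : ℝ := (Fintype.card B : ℝ)
  rcases (by positivity : 0 ≤ n * m).eq_or_lt with h_zero | h_pos
  · calc c ^ 4 * n ^ 2 * m ^ 2 = c ^ 4 * (n * m) ^ 2 := by ring
      _ = 0 := by rw [← h_zero]; ring
      _ ≤ _ := by positivity
  · refine le_of_mul_le_mul_left ?_ (pow_pos h_pos 2)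
    linear_combination h_four

/-- A bipartite graph with parts `A`, `B` of sizes `n`, `m` and at least `c·n·m` edges
(for some `0 ≤ c ≤ 1`) contains at least `c⁴ n² m²` (possibly degenerate) four-cycles,
i.e. quadruples `(u, u', v, v')` with all four pairs `uv, uv', u'v, u'v'` edges. -/
theorem bipartite_four_cycles {A B : Type*} [Fintype A] [Fintype B]
    (E : Finset (A × B)) (c : ℝ) (hc0 : 0 ≤ c) (hc1 : c ≤ 1)
    (hE : c * (Fintype.card A : ℝ) * (Fintype.card B : ℝ) ≤ (E.card : ℝ)) :
    c ^ 4 * (Fintype.card A : ℝ) ^ 2 * (Fintype.card B : ℝ) ^ 2 ≤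
      ((Finset.univ.filter fun q : (A × A) × (B × B) =>
          (q.1.1, q.2.1) ∈ E ∧ (q.1.1, q.2.2) ∈ E ∧
          (q.1.2, q.2.1) ∈ E ∧ (q.1.2, q.2.2) ∈ E).card : ℝ) :=
  bipartite_four_cycles_general E c hc0 hE
end
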